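/- arXiv:2007.12162 — 13 statements merged into one kernel-verified Lean document; each statement's English description precedes it below -/
import Mathlib

section
/- Let S be a regular semigroup and let e, f, h be idempotents of S. Then h belongs to the sandwich set S(e,f) (that is, he = h, fh = h and ef = ehf) if and only if he = h, fh = h, and for every idempotent g of S with ge = g and fg = g one has (eh)(eg) = eg and (gf)(hf) = gf. -/
private lemma mulc {S : Type*} [Semigroup S] {p q r : S} (h : p * q = r) (z : S) :
    p * (q * z) = r * z := by rw [← mul_assoc, h]

/-- In a regular semigroup, an idempotent `h` lies in the sandwich set
`S(e,f)` iff `h * e = h`, `f * h = h`, and for every idempotent `g` with `g * e = g`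
and `f * g = g` one has `(e*h)*(e*g) = e*g` and `(g*f)*(h*f) = g*f`. -/
theorem sandwich_iff_basic {S : Type*} [Semigroup S]
    (hreg : ∀ x : S, ∃ y : S, x * y * x = x)
    (e f h : S) (he : e * e = e) (hf : f * f = f) (hh : h * h = h) :
    (h * e = h ∧ f * h = h ∧ e * f = e * h * f) ↔
      (h * e = h ∧ f * h = h ∧
        ∀ g : S, g * g = g → g * e = g → f * g = g →
          (e * h) * (e * g) = e * g ∧ (g * f) * (h * f) = g * f) := by
  constructor
  · rintro ⟨h1, h2, h3⟩
    refine ⟨h1, h2, fun g hgg hge hfg => ⟨?_, ?_⟩⟩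
    · have key : e * (h * g) = e * g := by
        conv_rhs => rw [← hfg, ← mul_assoc, h3]
        simp only [mul_assoc, hfg]
      calc (e*h)*(e*g) = e*(h*(e*g)) := by simp only [mul_assoc]
        _ = e*(h*g) := by rw [mulc h1]
        _ = e*g := key
    · have key : g * (h * f) = g * f := by
        conv_rhs => rw [← hge, mul_assoc, h3]
        simp only [mul_assoc, mulc h2]
        rw [← mul_assoc g e, hge]
      calc (g*f)*(h*f) = g*(f*(h*f)) := by simp only [mul_assoc]
        _ = g*(h*f) := by rw [mulc h2]
        _ = g*f := key
  · rintro ⟨h1, h2, hG⟩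
    refine ⟨h1, h2, ?_⟩
    obtain ⟨y, hy⟩ := hreg (e * f)
    set x := y * (e * f) * y with hx
    have hy' : e * (f * (y * (e * f))) = e * f := by simpa [mul_assoc] using hy
    have hy2 : ∀ z : S, e * (f * (y * (e * (f * z)))) = e * (f * z) := by
      intro z; simpa [mul_assoc] using mulc hy z
    have hax' : e * (f * (x * (e * f))) = e * f := by
      simp only [hx, mul_assoc, hy', hy2]
    have hgg : (f * x * e) * (f * x * e) = f * x * e := by
      simp only [hx, mul_assoc, hy2]
    have hge : (f * x * e) * e = f * x * e := by simp only [mul_assoc, he]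
    have hfg : f * (f * x * e) = f * x * e := by simp only [mul_assoc, mulc hf]
    obtain ⟨H1, H2⟩ := hG (f * x * e) hgg hge hfg
    simp only [mul_assoc, mulc h1] at H1
    simp only [mul_assoc, mulc h2] at H2
    -- H1 : e*(h*(f*(x*e))) = e*(f*(x*e))
    -- H2 : f*(x*(e*(h*f))) = f*(x*(e*f))
    have t1 := congrArg (· * f) H1
    simp only [mul_assoc] at t1
    rw [hax'] at t1
    -- t1 : e*(h*(f*(x*(e*f)))) = e*f
    have t2 := congrArg (e * ·) H2
    rw [hax'] at t2
    -- t2 : e*(f*(x*(e*(h*f)))) = e*f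
    have t3 := congrArg (· * (h * f)) H1
    simp only [mul_assoc] at t3
    have t3' := t3.trans t2
    -- t3' : e*(h*(f*(x*(e*(h*f))))) = e*f
    have hb : e * (f * (h * (e * f))) = e * (h * f) := by
      simp only [mulc h2, mulc h1]
    have t4 := congrArg (· * (h * (e * f))) t1
    simp only [mul_assoc] at t4
    rw [hb] at t4
    -- t4 : e*(h*(f*(x*(e*(h*f))))) = e*(h*f)
    rw [mul_assoc]
    exact t3'.symm.trans t4
end

section
/- Let S be a regular semigroup and define a relation ≤ on S by: x ≤ y if and only if (x = y or x = y·s for some s ∈ S) and there exists an idempotent f of S with f·x = x, f ∈ xS¹ (that is, f = x or f = x·t for some t ∈ S), and x = f·y. Then ≤ is a partial order on S: it is reflexive, antisymmetric, and transitive. -/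
/-- Nambooripad's natural partial order on a regular semigroup:
`x ≤ y` iff `x ∈ yS¹` and `x = f * y` for some idempotent `f` with `f * x = x`
and `f ∈ xS¹`. -/
def natLe {S : Type*} [Semigroup S] (x y : S) : Prop :=
  (x = y ∨ ∃ s : S, x = y * s) ∧
    ∃ f : S, f * f = f ∧ f * x = x ∧ (f = x ∨ ∃ t : S, f = x * t) ∧ x = f * y

/-- On a regular semigroup the relation `natLe` is a partial order. -/
theorem natLe_partialOrder {S : Type*} [Semigroup S]
    (hreg : ∀ x : S, ∃ y : S, x * y * x = x) :
    (∀ x : S, natLe x x) ∧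
      (∀ x y : S, natLe x y → natLe y x → x = y) ∧
      (∀ x y z : S, natLe x y → natLe y z → natLe x z) := by
  refine ⟨?_, ?_, ?_⟩
  · intro x
    obtain ⟨y, hy⟩ := hreg x
    refine ⟨Or.inl rfl, x * y, ?_, hy, Or.inr ⟨y, rfl⟩, hy.symm⟩
    calc x * y * (x * y) = x * y * x * y := by rw [← mul_assoc]
    _ = x * y := by rw [hy]
  · rintro x y ⟨_, f, _, hfx, _, hxfy⟩ ⟨hyx, _⟩
    rcases hyx with h | ⟨s, hs⟩
    · exact h.symm
    · rw [hxfy, hs, ← mul_assoc, hfx, ← hs]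
  · rintro x y z ⟨hxy, f, hff, hfx, hfX, hxfy⟩ ⟨hyz, g, hgg, hgy, hgY, hygz⟩
    have hmem : x = z ∨ ∃ s : S, x = z * s := by
      rcases hxy with h | ⟨s, hs⟩
      · rw [h]; exact hyz
      · rcases hyz with h' | ⟨t, ht⟩
        · exact Or.inr ⟨s, by rw [hs, h']⟩
        · exact Or.inr ⟨t * s, by rw [hs, ht, mul_assoc]⟩
    have hgx : g * x = x := by
      rcases hxy with h | ⟨s, hs⟩
      · rw [h, hgy]
      · rw [hs, ← mul_assoc, hgy]
    have hgf : g * f = f := by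
      rcases hfX with h | ⟨t, ht⟩
      · rw [h, hgx]
      · rw [ht, ← mul_assoc, hgx]
    refine ⟨hmem, f * g, ?_, ?_, ?_, ?_⟩
    · calc f * g * (f * g) = f * (g * f) * g := by rw [mul_assoc, mul_assoc, mul_assoc]
      _ = f * g := by rw [hgf, hff]
    · rw [mul_assoc, hgx, hfx]
    · rcases hfX with h | ⟨t, ht⟩
      · exact Or.inr ⟨g, by rw [h]⟩
      · exact Or.inr ⟨t * g, by rw [ht, mul_assoc]⟩
    · rw [mul_assoc, ← hygz, ← hxfy]
end

section
/- Let S be a regular semigroup and let x, y ∈ S. Then the following are equivalent: (1) (x = y or x = y·s for some s ∈ S) and there exists an idempotent f with f·x = x, f ∈ xS¹, and x = f·y; (2) (x = y or x = s·y for some s ∈ S) and there exists an idempotent g with x·g = x, g ∈ S¹x (that is, g = x or g = t·x for some t ∈ S), and x = y·g. In other words, the natural partial order on a regular semigroup is self-dual. -/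
/-- The natural partial order on a regular semigroup is self-dual:
the right-sided definition via idempotents in the R-class coincides with the
left-sided definition via idempotents in the L-class. -/
theorem natLe_self_dual {S : Type*} [Semigroup S]
    (hreg : ∀ x : S, ∃ y : S, x * y * x = x) (x y : S) :
    ((x = y ∨ ∃ s : S, x = y * s) ∧
        ∃ f : S, f * f = f ∧ f * x = x ∧ (f = x ∨ ∃ t : S, f = x * t) ∧ x = f * y) ↔
      ((x = y ∨ ∃ s : S, x = s * y) ∧
        ∃ g : S, g * g = g ∧ x * g = x ∧ (g = x ∨ ∃ t : S, g = t * x) ∧ x = y * g) := by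
  constructor
  · rintro ⟨hR, e, he2, hex, heR, hxey⟩
    -- obtain t with x * t = e
    obtain ⟨t, ht⟩ : ∃ t : S, x * t = e := by
      rcases heR with h | ⟨t, ht⟩
      · refine ⟨x, ?_⟩; rw [h]; rw [h] at hex; exact hex
      · exact ⟨t, ht.symm⟩
    -- obtain s with y * s = x
    obtain ⟨s, hs⟩ : ∃ s : S, y * s = x := by
      rcases hR with h | ⟨s, hs⟩
      · exact ⟨t * x, by rw [← h, ← mul_assoc, ht, hex]⟩
      · exact ⟨s, hs.symm⟩
    have hxs : x * s = x := by
      conv_lhs => rw [hxey, mul_assoc, hs]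
      exact hex
    have hxtx : x * t * x = x := by rw [ht, hex]
    refine ⟨Or.inr ⟨e, hxey⟩, s * t * x, ?_, ?_, Or.inr ⟨s * t, rfl⟩, ?_⟩
    · calc s * t * x * (s * t * x) = s * t * (x * s) * t * x := by
            simp only [mul_assoc]
        _ = s * t * x := by rw [hxs, mul_assoc (s*t), ht, mul_assoc, hex]
    · calc x * (s * t * x) = x * s * t * x := by simp only [mul_assoc]
        _ = x := by rw [hxs, hxtx]
    · refine Eq.symm ?_
      calc y * (s * t * x) = y * s * t * x := by simp only [mul_assoc]
        _ = x := by rw [hs, hxtx]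
  · rintro ⟨hL, g, hg2, hxg, hgL, hxyg⟩
    -- obtain t with t * x = g
    obtain ⟨t, ht⟩ : ∃ t : S, t * x = g := by
      rcases hgL with h | ⟨t, ht⟩
      · refine ⟨x, ?_⟩; rw [h]; rw [h] at hxg; exact hxg
      · exact ⟨t, ht.symm⟩
    -- obtain s with s * y = x
    obtain ⟨s, hs⟩ : ∃ s : S, s * y = x := by
      rcases hL with h | ⟨s, hs⟩
      · exact ⟨x * t, by rw [← h, mul_assoc, ht, hxg]⟩
      · exact ⟨s, hs.symm⟩
    have hsx : s * x = x := by
      conv_lhs => rw [hxyg, ← mul_assoc, hs]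
      exact hxg
    have hxtx : x * t * x = x := by rw [mul_assoc, ht, hxg]
    refine ⟨Or.inr ⟨g, hxyg⟩, x * t * s, ?_, ?_, Or.inr ⟨t * s, by rw [mul_assoc]⟩, ?_⟩
    · calc x * t * s * (x * t * s) = x * t * (s * x) * t * s := by
            simp only [mul_assoc]
        _ = x * t * s := by rw [hsx, hxtx]
    · calc x * t * s * x = x * t * x := by rw [mul_assoc _ s, hsx]
        _ = x := hxtx
    · refine Eq.symm ?_
      calc x * t * s * y = x * t * x := by rw [mul_assoc _ s, hs]
        _ = x := hxtx
end

section
/- Let S be a regular semigroup. Then the following conditions are equivalent: (i) for all idempotents e, f, g of S, if ef = fe = f and eg = ge = g then fg = gf (that is, ω(e) is a semilattice for each idempotent e, equivalently S is locally inverse); (ii) for all idempotents e, f of S there is a unique idempotent h with he = h, fh = h and ef = ehf (that is, every sandwich set S(e,f) is a singleton); (iii) the natural partial order ≤ is compatible with multiplication: for all x, y, z ∈ S, x ≤ y implies xz ≤ yz and zx ≤ zy. -/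
section Aux
variable {S : Type*} [Semigroup S]

/-- refined inverses -/
private lemma inv_refine (hreg : ∀ x : S, ∃ y : S, x * y * x = x) (c : S) :
    ∃ a : S, c * (a * c) = c ∧ a * (c * a) = a := by
  obtain ⟨t, ht⟩ := hreg c
  have htn : c * (t * c) = c := by rw [← mul_assoc]; exact ht
  have htw : ∀ w : S, c * (t * (c * w)) = c * w := by
    intro w
    have := congrArg (· * w) ht
    simpa only [mul_assoc] using this
  refine ⟨t * (c * t), ?_, ?_⟩
  · calc c * (t * (c * t) * c) = c * (t * (c * (t * c))) := by simp only [mul_assoc]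
    _ = c * (t * c) := htw (t * c)
    _ = c := htn
  · calc t * (c * t) * (c * (t * (c * t)))
        = t * (c * (t * (c * (t * (c * t))))) := by simp only [mul_assoc]
    _ = t * (c * (t * (c * t))) := by rw [htw (t * (c * t))]
    _ = t * (c * t) := by rw [htw t]

private lemma natLe_refl (hreg : ∀ x : S, ∃ y : S, x * y * x = x) (c : S) : natLe c c := by
  obtain ⟨a, h1, h2⟩ := inv_refine hreg c
  refine ⟨Or.inl rfl, c * a, ?_, ?_, Or.inr ⟨a, rfl⟩, ?_⟩
  · calc c * a * (c * a) = c * (a * c) * a := by simp only [mul_assoc]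
    _ = c * a := by rw [h1]
  · calc c * a * c = c * (a * c) := by rw [mul_assoc]
    _ = c := h1
  · calc c = c * (a * c) := h1.symm
    _ = c * a * c := by rw [mul_assoc]

/-- antisymmetry of natLe -/
private lemma natLe_antisymm {A B : S} (h1 : natLe A B) (h2 : natLe B A) : A = B := by
  obtain ⟨-, F, -, hFA, -, hAB⟩ := h1
  obtain ⟨h2a, -⟩ := h2
  rcases h2a with h | ⟨s, hs⟩
  · exact h.symm
  · calc A = F * B := hAB
    _ = F * (A * s) := by rw [← hs]
    _ = F * A * s := by rw [mul_assoc]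
    _ = A * s := by rw [hFA]
    _ = B := hs.symm

/-- (iii) → (i) -/
private lemma imp31
    (Hiii : ∀ x y z : S, natLe x y → natLe (x * z) (y * z) ∧ natLe (z * x) (z * y)) :
    ∀ e f g : S, e * e = e → f * f = f → g * g = g →
      e * f = f → f * e = f → e * g = g → g * e = g → f * g = g * f := by
  intro e f g he hf hg hef hfe heg hge
  have hle : ∀ p : S, p * p = p → e * p = p → p * e = p → natLe p e := by
    intro p hp hep hpe
    exact ⟨Or.inr ⟨p, hep.symm⟩, p, hp, hp, Or.inl rfl, hpe.symm⟩
  have hfe' : natLe f e := hle f hf hef hfe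
  have hge' : natLe g e := hle g hg heg hge
  -- absorption: natLe A c with c idempotent gives c * A = A
  have habs : ∀ A c : S, c * c = c → natLe A c → c * A = A := by
    intro A c hc hAc
    obtain ⟨h1, -⟩ := hAc
    rcases h1 with h | ⟨s, hs⟩
    · rw [h, hc]
    · rw [hs, ← mul_assoc, hc]
  have h1 : natLe (f * g) g := by
    have := (Hiii f e g hfe').1; rwa [heg] at this
  have h1' : natLe (g * f) g := by
    have := (Hiii f e g hfe').2; rwa [hge] at this
  have h2 : natLe (g * f) f := by
    have := (Hiii g e f hge').1; rwa [hef] at this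
  have h2' : natLe (f * g) f := by
    have := (Hiii g e f hge').2; rwa [hfe] at this
  have habs1 : g * (f * g) = f * g := habs _ g hg h1
  have habs2 : f * (g * f) = g * f := habs _ f hf h2
  -- f*g ≤ g*f and g*f ≤ f*g
  have h3 : natLe (f * g) (g * f) := by
    have := (Hiii (f * g) f g h2').2
    rwa [habs1] at this
  have h4 : natLe (g * f) (f * g) := by
    have := (Hiii (g * f) g f h1').2
    rwa [habs2] at this
  exact natLe_antisymm h3 h4


section Aux2
variable {S : Type*} [Semigroup S]

private lemma liftw {p q r : S} (h : p * q = r) (w : S) : p * (q * w) = r * w := by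
  rw [← mul_assoc, h]

/-- (i) → (ii) -/
private lemma imp12 (hreg : ∀ x : S, ∃ y : S, x * y * x = x)
    (Hi : ∀ e f g : S, e * e = e → f * f = f → g * g = g →
        e * f = f → f * e = f → e * g = g → g * e = g → f * g = g * f) :
    ∀ e f : S, e * e = e → f * f = f →
      ∃! h : S, h * h = h ∧ h * e = h ∧ f * h = h ∧ e * f = e * h * f := by
  intro e f he hf
  obtain ⟨T, hT1, hT2⟩ := inv_refine hreg (e * f)
  have hT2w : ∀ w : S, T * (e * (f * (T * w))) = T * w := fun w => by
    have := congrArg (· * w) hT2; simpa only [mul_assoc] using this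
  have hT1n : e * (f * (T * (e * f))) = e * f := by
    simpa only [mul_assoc] using hT1
  have ex1 : (f * (T * e)) * (f * (T * e)) = f * (T * e) := by
    calc (f * (T * e)) * (f * (T * e)) = f * (T * (e * (f * (T * e)))) := by
          simp only [mul_assoc]
      _ = f * (T * e) := by rw [hT2w e]
  have ex2 : (f * (T * e)) * e = f * (T * e) := by
    calc (f * (T * e)) * e = f * (T * (e * e)) := by simp only [mul_assoc]
      _ = f * (T * e) := by rw [he]
  have ex3 : f * (f * (T * e)) = f * (T * e) := by
    rw [← mul_assoc, hf]
  have ex4 : e * f = e * (f * (T * e)) * f := by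
    calc e * f = e * (f * (T * (e * f))) := hT1n.symm
      _ = e * (f * (T * e)) * f := by simp only [mul_assoc]
  -- uniqueness core: any two sandwich elements agree
  have key : ∀ h k : S,
      (h * h = h ∧ h * e = h ∧ f * h = h ∧ e * f = e * h * f) →
      (k * k = k ∧ k * e = k ∧ f * k = k ∧ e * f = e * k * f) → h = k := by
    intro h k ⟨hhh, hhe, hfh, hehf⟩ ⟨hkk, hke, hfk, hekf⟩
    have hhew := liftw hhe
    have hkew := liftw hke
    have hfhw := liftw hfh
    have hfkw := liftw hfk
    have hekf' : e * f = e * (k * f) := by simpa only [mul_assoc] using hekf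
    have hehf' : e * f = e * (h * f) := by simpa only [mul_assoc] using hehf
    have d1 : e * (f * (k * (e * f))) = e * f := by
      rw [hfkw (e * f), hkew f, ← hekf']
    have d1' : e * (f * (h * (e * f))) = e * f := by
      rw [hfhw (e * f), hhew f, ← hehf']
    have d1w : ∀ w : S, e * (f * (k * (e * (f * w)))) = e * (f * w) := fun w => by
      have := congrArg (· * w) d1; simpa only [mul_assoc] using this
    have d1'w : ∀ w : S, e * (f * (h * (e * (f * w)))) = e * (f * w) := fun w => by
      have := congrArg (· * w) d1'; simpa only [mul_assoc] using this
    have rect_h : h * (k * h) = h := by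
      have e1 : h * (e * (f * (k * (e * (f * h))))) = h * (k * h) := by
        rw [hhew, hfkw, hkew, hfh]
      have e2 : h * (e * (f * (k * (e * (f * h))))) = h := by
        rw [d1w h, hfh, hhew, hhh]
      exact e1.symm.trans e2
    have rect_k : k * (h * k) = k := by
      have e1 : k * (e * (f * (h * (e * (f * k))))) = k * (h * k) := by
        rw [hkew, hfhw, hhew, hfk]
      have e2 : k * (e * (f * (h * (e * (f * k))))) = k := by
        rw [d1'w k, hfk, hkew, hkk]
      exact e1.symm.trans e2
    -- commutation in ω(e)
    have CE : (e * h) * (e * k) = (e * k) * (e * h) := by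
      apply Hi e (e * h) (e * k) he
      · calc (e * h) * (e * h) = e * (h * (e * h)) := by simp only [mul_assoc]
          _ = e * (h * h) := by rw [hhew]
          _ = e * h := by rw [hhh]
      · calc (e * k) * (e * k) = e * (k * (e * k)) := by simp only [mul_assoc]
          _ = e * (k * k) := by rw [hkew]
          _ = e * k := by rw [hkk]
      · rw [← mul_assoc, he]
      · calc (e * h) * e = e * (h * e) := by rw [mul_assoc]
          _ = e * h := by rw [hhe]
      · rw [← mul_assoc, he]
      · calc (e * k) * e = e * (k * e) := by rw [mul_assoc]
          _ = e * k := by rw [hke]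
    have E1 : e * (h * k) = e * (k * h) := by
      have := CE
      simp only [mul_assoc] at this
      rw [hhew, hkew] at this
      exact this
    -- commutation in ω(f)
    have CF : (h * f) * (k * f) = (k * f) * (h * f) := by
      apply Hi f (h * f) (k * f) hf
      · calc (h * f) * (h * f) = h * (f * (h * f)) := by simp only [mul_assoc]
          _ = h * (h * f) := by rw [hfhw]
          _ = h * f := by rw [← mul_assoc, hhh]
      · calc (k * f) * (k * f) = k * (f * (k * f)) := by simp only [mul_assoc]
          _ = k * (k * f) := by rw [hfkw]
          _ = k * f := by rw [← mul_assoc, hkk]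
      · rw [← mul_assoc, hfh]
      · calc (h * f) * f = h * (f * f) := by rw [mul_assoc]
          _ = h * f := by rw [hf]
      · rw [← mul_assoc, hfk]
      · calc (k * f) * f = k * (f * f) := by rw [mul_assoc]
          _ = k * f := by rw [hf]
    have E2 : h * (k * f) = k * (h * f) := by
      have := CF
      simp only [mul_assoc] at this
      rw [hfkw, hfhw] at this
      exact this
    have I1 : h * k = h := by
      have c : h * (e * (h * k)) = h * (e * (k * h)) := by rw [E1]
      rw [hhew, hhew, ← mul_assoc, hhh, rect_h] at c
      exact c
    have I2 : k * h = k := by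
      have c : k * (e * (h * k)) = k * (e * (k * h)) := by rw [E1]
      rw [hkew, hkew, rect_k, ← mul_assoc, hkk] at c
      exact c.symm
    have E3 : h * f = k * f := by
      have c := E2
      rw [← mul_assoc, ← mul_assoc, I1, I2] at c
      exact c
    calc h = h * h := hhh.symm
      _ = h * (f * h) := by rw [hfh]
      _ = (h * f) * h := by rw [mul_assoc]
      _ = (k * f) * h := by rw [E3]
      _ = k * (f * h) := by rw [mul_assoc]
      _ = k * h := by rw [hfh]
      _ = k := I2
  exact ⟨f * (T * e), ⟨ex1, ex2, ex3, ex4⟩,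
    fun h hh => key h (f * (T * e)) hh ⟨ex1, ex2, ex3, ex4⟩⟩

end Aux2
section Aux3
variable {S : Type*} [Semigroup S]

/-- (ii) → (i) -/
private lemma imp21 (hreg : ∀ x : S, ∃ y : S, x * y * x = x)
    (Hii : ∀ e f : S, e * e = e → f * f = f →
      ∃! h : S, h * h = h ∧ h * e = h ∧ f * h = h ∧ e * f = e * h * f) :
    ∀ e f g : S, e * e = e → f * f = f → g * g = g →
      e * f = f → f * e = f → e * g = g → g * e = g → f * g = g * f := by
  intro e f g he hf hg hef hfe heg hge
  have uniq : ∀ p q h₁ h₂ : S, p * p = p → q * q = q →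
      (h₁ * h₁ = h₁ ∧ h₁ * p = h₁ ∧ q * h₁ = h₁ ∧ p * q = p * h₁ * q) →
      (h₂ * h₂ = h₂ ∧ h₂ * p = h₂ ∧ q * h₂ = h₂ ∧ p * q = p * h₂ * q) → h₁ = h₂ := by
    intro p q h₁ h₂ hp hq c1 c2
    obtain ⟨h₀, -, hu⟩ := Hii p q hp hq
    exact (hu h₁ c1).trans (hu h₂ c2).symm
  have lemA : ∀ p h : S, p * p = p → h * h = h → e * p = p → p * e = p → e * h = h →
      h * e = h → h * p = h → p * h = p → h = p := by
    intro p h hpp hhh hep hpe heh hhe hhp hph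
    refine uniq p e h p hpp he ⟨hhh, hhp, heh, ?_⟩ ⟨hpp, hpp, hep, ?_⟩
    · rw [hph]
    · rw [hpp]
  have lemB : ∀ p h : S, p * p = p → h * h = h → e * p = p → p * e = p → e * h = h →
      h * e = h → p * h = h → h * p = p → h = p := by
    intro p h hpp hhh hep hpe heh hhe hph hhp
    refine uniq e p h p he hpp ⟨hhh, hhe, hph, ?_⟩ ⟨hpp, hpe, hpp, ?_⟩
    · rw [mul_assoc, hhp]
    · rw [mul_assoc, hpp]
  have uniqInv : ∀ a a₁ a₂ : S, e * a = a → a * e = a → e * a₁ = a₁ → a₁ * e = a₁ →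
      e * a₂ = a₂ → a₂ * e = a₂ → a * (a₁ * a) = a → a₁ * (a * a₁) = a₁ →
      a * (a₂ * a) = a → a₂ * (a * a₂) = a₂ → a₁ = a₂ := by
    intro a a₁ a₂ hea hae hea1 ha1e hea2 ha2e hv1 hv1' hv2 hv2'
    have idem1 : (a * a₁) * (a * a₁) = a * a₁ := by
      calc (a * a₁) * (a * a₁) = a * (a₁ * (a * a₁)) := by simp only [mul_assoc]
        _ = a * a₁ := by rw [hv1']
    have idem2 : (a * a₂) * (a * a₂) = a * a₂ := by
      calc (a * a₂) * (a * a₂) = a * (a₂ * (a * a₂)) := by simp only [mul_assoc]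
        _ = a * a₂ := by rw [hv2']
    have e12 : (a * a₁) * (a * a₂) = a * a₂ := by
      calc (a * a₁) * (a * a₂) = (a * (a₁ * a)) * a₂ := by simp only [mul_assoc]
        _ = a * a₂ := by rw [hv1]
    have e21 : (a * a₂) * (a * a₁) = a * a₁ := by
      calc (a * a₂) * (a * a₁) = (a * (a₂ * a)) * a₁ := by simp only [mul_assoc]
        _ = a * a₁ := by rw [hv2]
    have hR : a * a₂ = a * a₁ := by
      refine lemB (a * a₁) (a * a₂) idem1 idem2 ?_ ?_ ?_ ?_ e12 e21
      · rw [← mul_assoc, hea]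
      · rw [mul_assoc, ha1e]
      · rw [← mul_assoc, hea]
      · rw [mul_assoc, ha2e]
    have f12 : (a₁ * a) * (a₂ * a) = a₁ * a := by
      calc (a₁ * a) * (a₂ * a) = a₁ * (a * (a₂ * a)) := by simp only [mul_assoc]
        _ = a₁ * a := by rw [hv2]
    have f21 : (a₂ * a) * (a₁ * a) = a₂ * a := by
      calc (a₂ * a) * (a₁ * a) = a₂ * (a * (a₁ * a)) := by simp only [mul_assoc]
        _ = a₂ * a := by rw [hv1]
    have idf1 : (a₁ * a) * (a₁ * a) = a₁ * a := by
      calc (a₁ * a) * (a₁ * a) = (a₁ * (a * a₁)) * a := by simp only [mul_assoc]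
        _ = a₁ * a := by rw [hv1']
    have idf2 : (a₂ * a) * (a₂ * a) = a₂ * a := by
      calc (a₂ * a) * (a₂ * a) = (a₂ * (a * a₂)) * a := by simp only [mul_assoc]
        _ = a₂ * a := by rw [hv2']
    have hL : a₁ * a = a₂ * a := by
      refine lemA (a₂ * a) (a₁ * a) idf2 idf1 ?_ ?_ ?_ ?_ f12 f21
      · rw [← mul_assoc, hea2]
      · rw [mul_assoc, hae]
      · rw [← mul_assoc, hea1]
      · rw [mul_assoc, hae]
    calc a₁ = a₁ * (a * a₁) := hv1'.symm
      _ = (a₁ * a) * a₁ := by rw [mul_assoc]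
      _ = (a₂ * a) * a₁ := by rw [hL]
      _ = a₂ * (a * a₁) := by rw [mul_assoc]
      _ = a₂ * (a * a₂) := by rw [hR]
      _ = a₂ := hv2'
  -- squares of products of local idempotents are idempotent
  have sq : ∀ f g : S, f * f = f → g * g = g → e * f = f → f * e = f →
      e * g = g → g * e = g → (f * g) * (f * g) = f * g := by
    intro f g hf hg hef hfe heg hge
    obtain ⟨T, hT1, hT2⟩ := inv_refine hreg (f * g)
    have hT2w : ∀ w : S, T * (f * (g * (T * w))) = T * w := fun w => by
      have := congrArg (· * w) hT2; simpa only [mul_assoc] using this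
    have hew : e * (f * g) = f * g := by rw [← mul_assoc, hef]
    have hwe : (f * g) * e = f * g := by rw [mul_assoc, hge]
    have heT : e * (e * (T * e)) = e * (T * e) := by rw [← mul_assoc, he]
    have hTe : (e * (T * e)) * e = e * (T * e) := by
      calc (e * (T * e)) * e = e * (T * (e * e)) := by simp only [mul_assoc]
        _ = e * (T * e) := by rw [he]
    have hvwW : (f * g) * ((e * (T * e)) * (f * g)) = f * g := by
      calc (f * g) * ((e * (T * e)) * (f * g))
          = (f * g) * (e * (T * (e * (f * g)))) := by simp only [mul_assoc]
        _ = (f * g) * (e * (T * (f * g))) := by rw [hew]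
        _ = (f * g) * (T * (f * g)) := by rw [liftw hwe]
        _ = f * g := hT1
    have hvWw : (e * (T * e)) * ((f * g) * (e * (T * e))) = e * (T * e) := by
      calc (e * (T * e)) * ((f * g) * (e * (T * e)))
          = e * (T * (e * (f * (g * (e * (T * e)))))) := by simp only [mul_assoc]
        _ = e * (T * (e * (f * (g * (T * e))))) := by rw [liftw hge]
        _ = e * (T * (f * (g * (T * e)))) := by rw [liftw hef]
        _ = e * (T * e) := by rw [hT2w e]
    have hvWww : ∀ w : S, (e * (T * e)) * (f * (g * ((e * (T * e)) * w)))
        = (e * (T * e)) * w := fun w => by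
      have := congrArg (· * w) hvWw; simpa only [mul_assoc] using this
    have Weq : e * (T * e) = g * ((e * (T * e)) * f) := by
      refine uniqInv (f * g) (e * (T * e)) (g * ((e * (T * e)) * f)) hew hwe heT hTe
        ?_ ?_ ?_ ?_ ?_ ?_
      · rw [← mul_assoc, heg]
      · calc (g * ((e * (T * e)) * f)) * e = g * ((e * (T * e)) * (f * e)) := by
              simp only [mul_assoc]
          _ = g * ((e * (T * e)) * f) := by rw [hfe]
      · exact hvwW
      · exact hvWw
      · calc (f * g) * ((g * ((e * (T * e)) * f)) * (f * g))
            = f * (g * (g * ((e * (T * e)) * (f * (f * g))))) := by simp only [mul_assoc]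
          _ = f * (g * ((e * (T * e)) * (f * (f * g)))) := by rw [liftw hg]
          _ = f * (g * ((e * (T * e)) * (f * g))) := by rw [liftw hf]
          _ = (f * g) * ((e * (T * e)) * (f * g)) := by rw [← mul_assoc]
          _ = f * g := hvwW
      · calc (g * ((e * (T * e)) * f)) * ((f * g) * (g * ((e * (T * e)) * f)))
            = g * ((e * (T * e)) * (f * (f * (g * (g * ((e * (T * e)) * f)))))) := by
              simp only [mul_assoc]
          _ = g * ((e * (T * e)) * (f * (g * (g * ((e * (T * e)) * f))))) := by
              rw [liftw hf]
          _ = g * ((e * (T * e)) * (f * (g * ((e * (T * e)) * f)))) := by rw [liftw hg]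
          _ = g * ((e * (T * e)) * f) := by rw [hvWww f]
    have hWW : (e * (T * e)) * (e * (T * e)) = e * (T * e) := by
      have h1 : (g * ((e * (T * e)) * f)) * (g * ((e * (T * e)) * f))
          = g * ((e * (T * e)) * f) := by
        calc (g * ((e * (T * e)) * f)) * (g * ((e * (T * e)) * f))
            = g * ((e * (T * e)) * (f * (g * ((e * (T * e)) * f)))) := by
              simp only [mul_assoc]
          _ = g * ((e * (T * e)) * f) := by rw [hvWww f]
      rw [← Weq] at h1
      exact h1
    have final1 : f * g = e * (T * e) := by
      refine uniqInv (e * (T * e)) (f * g) (e * (T * e)) heT hTe hew hwe heT hTe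
        hvWw hvwW ?_ ?_
      · rw [hWW, hWW]
      · rw [hWW, hWW]
    rw [final1, hWW]
  have sqfg := sq f g hf hg hef hfe heg hge
  have sqgf := sq g f hg hf heg hge hef hfe
  refine uniqInv (f * g) (f * g) (g * f) ?_ ?_ ?_ ?_ ?_ ?_ ?_ ?_ ?_ ?_
  · rw [← mul_assoc, hef]
  · rw [mul_assoc, hge]
  · rw [← mul_assoc, hef]
  · rw [mul_assoc, hge]
  · rw [← mul_assoc, heg]
  · rw [mul_assoc, hfe]
  · rw [sqfg, sqfg]
  · rw [sqfg, sqfg]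
  · calc (f * g) * ((g * f) * (f * g))
        = f * (g * (g * (f * (f * g)))) := by simp only [mul_assoc]
      _ = f * (g * (f * (f * g))) := by rw [liftw hg]
      _ = f * (g * (f * g)) := by rw [liftw hf]
      _ = (f * g) * (f * g) := by rw [← mul_assoc]
      _ = f * g := sqfg
  · calc (g * f) * ((f * g) * (g * f))
        = g * (f * (f * (g * (g * f)))) := by simp only [mul_assoc]
      _ = g * (f * (g * (g * f))) := by rw [liftw hf]
      _ = g * (f * (g * f)) := by rw [liftw hg]
      _ = (g * f) * (g * f) := by rw [← mul_assoc]
      _ = g * f := sqgf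
end Aux3
section Aux4
variable {S : Type*} [Semigroup S]

set_option maxHeartbeats 2000000 in
/-- (i) → (iii) -/
private lemma imp13 (hreg : ∀ x : S, ∃ y : S, x * y * x = x)
    (Hi : ∀ e f g : S, e * e = e → f * f = f → g * g = g →
        e * f = f → f * e = f → e * g = g → g * e = g → f * g = g * f) :
    ∀ x y z : S, natLe x y → natLe (x * z) (y * z) ∧ natLe (z * x) (z * y) := by
  intro x y z hxy
  obtain ⟨h1, F₀, hF0i, hF0x, -, hF0y⟩ := hxy
  rcases h1 with heq | ⟨s₀, hs₀⟩
  · subst heq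
    exact ⟨natLe_refl hreg _, natLe_refl hreg _⟩
  -- hs₀ : x = y * s₀ ; hF0x : F₀ * x = x ; hF0y : x = F₀ * y ; hF0i : F₀ * F₀ = F₀
  obtain ⟨a, hxa, hax⟩ := inv_refine hreg x
  -- basic absorption facts
  have hxs₀ : x * s₀ = x := by
    conv_lhs => rw [hF0y]
    rw [mul_assoc, ← hs₀, hF0x]
  have yf₀ : y * (s₀ * (a * x)) = x := by
    rw [← mul_assoc, ← hs₀, hxa]
  have xf₀ : x * (s₀ * (a * x)) = x := by
    rw [← mul_assoc, hxs₀, hxa]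
  have xf₀w : ∀ w : S, x * (s₀ * (a * (x * w))) = x * w := fun w => by
    have := congrArg (· * w) xf₀; simpa only [mul_assoc] using this
  have haxw : ∀ w : S, a * (x * (a * w)) = a * w := fun w => by
    have := congrArg (· * w) hax; simpa only [mul_assoc] using this
  have hF0xw : ∀ w : S, F₀ * (x * w) = x * w := fun w => by
    have := congrArg (· * w) hF0x; simpa only [mul_assoc] using this
  -- the two-sided mediating inverse x'
  obtain ⟨xp, P1, P2, P3, P4⟩ : ∃ xp : S, x * (xp * x) = x ∧ xp * (x * xp) = xp ∧
      x * (xp * y) = x ∧ y * (xp * x) = x := by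
    refine ⟨(s₀ * (a * x)) * (a * F₀), ?_, ?_, ?_, ?_⟩
    · show x * ((s₀ * (a * x)) * (a * F₀) * x) = x
      simp only [mul_assoc]
      rw [hF0x, hxa, xf₀]
    · show (s₀ * (a * x)) * (a * F₀) * (x * ((s₀ * (a * x)) * (a * F₀)))
        = (s₀ * (a * x)) * (a * F₀)
      simp only [mul_assoc]
      rw [hF0xw, haxw, xf₀w]
    · show x * ((s₀ * (a * x)) * (a * F₀) * y) = x
      simp only [mul_assoc]
      rw [← hF0y, hxa, xf₀]
    · show y * ((s₀ * (a * x)) * (a * F₀) * x) = x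
      simp only [mul_assoc]
      rw [hF0x, hxa, yf₀]
  clear hxa hax hxs₀ yf₀ xf₀ xf₀w haxw hF0xw hF0i hF0x hF0y hs₀
  -- lifted versions
  have P1w : ∀ w : S, x * (xp * (x * w)) = x * w := fun w => by
    have := congrArg (· * w) P1; simpa only [mul_assoc] using this
  have P3w : ∀ w : S, x * (xp * (y * w)) = x * w := fun w => by
    have := congrArg (· * w) P3; simpa only [mul_assoc] using this
  have P4w : ∀ w : S, y * (xp * (x * w)) = x * w := fun w => by
    have := congrArg (· * w) P4; simpa only [mul_assoc] using this
  have heyx' : y * xp = x * xp := by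
    calc y * xp = y * (xp * (x * xp)) := by rw [P2]
      _ = (y * (xp * x)) * xp := by simp only [mul_assoc]
      _ = x * xp := by rw [P4]
  have hyx'y : y * (xp * y) = x := by
    calc y * (xp * y) = (y * xp) * y := by rw [← mul_assoc]
      _ = (x * xp) * y := by rw [heyx']
      _ = x * (xp * y) := by rw [mul_assoc]
      _ = x := P3
  have hyx'yw : ∀ w : S, y * (xp * (y * w)) = x * w := fun w => by
    have := congrArg (· * w) hyx'y; simpa only [mul_assoc] using this
  have hee : (y * xp) * (y * xp) = y * xp := by
    calc (y * xp) * (y * xp) = y * (xp * (y * xp)) := by rw [mul_assoc]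
      _ = y * (xp * (x * xp)) := by rw [heyx']
      _ = y * xp := by rw [P2]
  have heew : ∀ w : S, y * (xp * (y * (xp * w))) = y * (xp * w) := fun w => by
    have := congrArg (· * w) hee; simpa only [mul_assoc] using this
  -- inverses for y, z and the products
  obtain ⟨yi, hy1, hy2⟩ := inv_refine hreg y
  obtain ⟨zi, hz1, hz2⟩ := inv_refine hreg z
  obtain ⟨b1, hb1, hb2⟩ := inv_refine hreg (y * z)
  obtain ⟨a1, ha1, -⟩ := inv_refine hreg (x * z)
  obtain ⟨d1, hd1, -⟩ := inv_refine hreg (z * y)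
  have hyw : ∀ w : S, y * (yi * (y * w)) = y * w := fun w => by
    have := congrArg (· * w) hy1; simpa only [mul_assoc] using this
  have hzw : ∀ w : S, z * (zi * (z * w)) = z * w := fun w => by
    have := congrArg (· * w) hz1; simpa only [mul_assoc] using this
  have hb1n : y * (z * (b1 * (y * z))) = y * z := by
    simpa only [mul_assoc] using hb1
  have hb2w : ∀ w : S, b1 * (y * (z * (b1 * w))) = b1 * w := fun w => by
    have := congrArg (· * w) hb2; simpa only [mul_assoc] using this
  have ha1n : x * (z * (a1 * (x * z))) = x * z := by
    simpa only [mul_assoc] using ha1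
  have ha1w : ∀ w : S, x * (z * (a1 * (x * (z * w)))) = x * (z * w) := fun w => by
    have := congrArg (· * w) ha1; simpa only [mul_assoc] using this
  have hd1w : ∀ w : S, z * (y * (d1 * (z * (y * w)))) = z * (y * w) := fun w => by
    have := congrArg (· * w) hd1; simpa only [mul_assoc] using this
  have hxyy : x * (yi * y) = x := by
    conv_lhs => rw [← hyx'y]
    simp only [mul_assoc]
    rw [hy1, hyx'y]
  have hxyyw : ∀ w : S, x * (yi * (y * w)) = x * w := fun w => by
    have := congrArg (· * w) hxyy; simpa only [mul_assoc] using this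
  have hqq : (yi * y) * (yi * y) = yi * y := by
    calc (yi * y) * (yi * y) = yi * (y * (yi * y)) := by simp only [mul_assoc]
      _ = yi * y := by rw [hy1]
  have hrr : (y * yi) * (y * yi) = y * yi := by
    calc (y * yi) * (y * yi) = y * (yi * (y * yi)) := by simp only [mul_assoc]
      _ = y * yi := by rw [hy2]
  constructor
  · -- natLe (x*z) (y*z)
    -- commutation in ω(yi*y)
    have CC : ((yi * y) * (xp * x)) * ((yi * y) * (z * (b1 * y)))
        = ((yi * y) * (z * (b1 * y))) * ((yi * y) * (xp * x)) := by
      apply Hi (yi * y) _ _ hqq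
      · show (yi * y) * (xp * x) * ((yi * y) * (xp * x)) = (yi * y) * (xp * x)
        simp only [mul_assoc]
        rw [hxyyw, P1]
      · show (yi * y) * (z * (b1 * y)) * ((yi * y) * (z * (b1 * y)))
          = (yi * y) * (z * (b1 * y))
        simp only [mul_assoc]
        rw [hyw, hb2w]
      · rw [← mul_assoc, hqq]
      · show (yi * y) * (xp * x) * (yi * y) = (yi * y) * (xp * x)
        simp only [mul_assoc]
        rw [hxyy]
      · rw [← mul_assoc, hqq]
      · show (yi * y) * (z * (b1 * y)) * (yi * y) = (yi * y) * (z * (b1 * y))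
        simp only [mul_assoc]
        rw [hy1]
    have tcomm : yi * (y * (xp * (x * (z * (b1 * y)))))
        = yi * (y * (z * (b1 * (y * (xp * x))))) := by
      have := CC
      simp only [mul_assoc] at this
      rw [hxyyw, hyw] at this
      exact this
    have tcommw : ∀ w : S, yi * (y * (xp * (x * (z * (b1 * (y * w))))))
        = yi * (y * (z * (b1 * (y * (xp * (x * w)))))) := fun w => by
      have := congrArg (· * w) tcomm; simpa only [mul_assoc] using this
    have c1R : (y * z) * (zi * ((z * (b1 * y)) * (yi * (x * z)))) = x * z := by
      calc (y * z) * (zi * ((z * (b1 * y)) * (yi * (x * z))))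
          = y * (z * (zi * (z * (b1 * (y * (yi * (x * z))))))) := by simp only [mul_assoc]
        _ = y * (z * (b1 * (y * (yi * (x * z))))) := by rw [hzw]
        _ = y * (z * (b1 * (y * (yi * (y * (xp * (x * z))))))) := by rw [P4w z]
        _ = y * (z * (b1 * (y * (xp * (x * z))))) := by rw [hyw (xp * (x * z))]
        _ = (y * (yi * y)) * (z * (b1 * (y * (xp * (x * z))))) := by rw [hy1]
        _ = y * (yi * (y * (z * (b1 * (y * (xp * (x * z))))))) := by simp only [mul_assoc]
        _ = y * (yi * (y * (xp * (x * (z * (b1 * (y * z))))))) := by rw [tcommw z]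
        _ = y * (xp * (x * (z * (b1 * (y * z))))) := by rw [hyw]
        _ = x * (z * (b1 * (y * z))) := by rw [P4w]
        _ = y * (xp * (y * (z * (b1 * (y * z))))) := (hyx'yw (z * (b1 * (y * z)))).symm
        _ = y * (xp * (y * z)) := by rw [hb1n]
        _ = x * z := hyx'yw z
    have G2R : ((x * z) * (a1 * (x * xp))) * (x * z) = x * z := by
      show (x * z) * (a1 * (x * xp)) * (x * z) = x * z
      simp only [mul_assoc]
      rw [P1w, ha1n]
    have G1R : ((x * z) * (a1 * (x * xp))) * ((x * z) * (a1 * (x * xp)))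
        = (x * z) * (a1 * (x * xp)) := by
      rw [← mul_assoc, G2R]
    have G4R : x * z = ((x * z) * (a1 * (x * xp))) * (y * z) := by
      have : (x * z) * (a1 * (x * xp)) * (y * z) = x * z := by
        simp only [mul_assoc]
        rw [P3w, ha1n]
      exact this.symm
    exact ⟨Or.inr ⟨zi * ((z * (b1 * y)) * (yi * (x * z))), c1R.symm⟩,
      (x * z) * (a1 * (x * xp)), G1R, G2R, Or.inr ⟨a1 * (x * xp), rfl⟩, G4R⟩
  · -- natLe (z*x) (z*y)
    have c1L : (z * y) * (xp * x) = z * x := by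
      calc (z * y) * (xp * x) = z * (y * (xp * x)) := by rw [mul_assoc]
        _ = z * x := by rw [P4]
    -- commutation in ω(y*yi)
    have CC' : ((y * xp) * (y * yi)) * ((y * (d1 * z)) * (y * yi))
        = ((y * (d1 * z)) * (y * yi)) * ((y * xp) * (y * yi)) := by
      apply Hi (y * yi) _ _ hrr
      · show (y * xp) * (y * yi) * ((y * xp) * (y * yi)) = (y * xp) * (y * yi)
        simp only [mul_assoc]
        rw [hyw (xp * (y * yi)), heew]
      · show (y * (d1 * z)) * (y * yi) * ((y * (d1 * z)) * (y * yi))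
          = (y * (d1 * z)) * (y * yi)
        simp only [mul_assoc]
        rw [hyw (d1 * (z * (y * yi))), hd1w yi]
      · show (y * yi) * ((y * xp) * (y * yi)) = (y * xp) * (y * yi)
        simp only [mul_assoc]
        rw [hyw (xp * (y * yi))]
      · show (y * xp) * (y * yi) * (y * yi) = (y * xp) * (y * yi)
        simp only [mul_assoc]
        rw [hy2]
      · show (y * yi) * ((y * (d1 * z)) * (y * yi)) = (y * (d1 * z)) * (y * yi)
        simp only [mul_assoc]
        rw [hyw (d1 * (z * (y * yi)))]
      · show (y * (d1 * z)) * (y * yi) * (y * yi) = (y * (d1 * z)) * (y * yi)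
        simp only [mul_assoc]
        rw [hy2]
    have tP : y * (xp * (y * (d1 * (z * (y * yi)))))
        = y * (d1 * (z * (y * (xp * (y * yi))))) := by
      have := CC'
      simp only [mul_assoc] at this
      rw [hyw (d1 * (z * (y * yi))), hyw (xp * (y * yi))] at this
      exact this
    have tPw : ∀ w : S, y * (xp * (y * (d1 * (z * (y * (yi * w))))))
        = y * (d1 * (z * (y * (xp * (y * (yi * w))))))  := fun w => by
      have := congrArg (· * w) tP; simpa only [mul_assoc] using this
    have tMw : ∀ w : S, y * (xp * (y * (d1 * (z * (y * (xp * w))))))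
        = y * (d1 * (z * (y * (xp * w)))) := by
      intro w
      calc y * (xp * (y * (d1 * (z * (y * (xp * w))))))
          = y * (xp * (y * (d1 * (z * (y * (yi * (y * (xp * w)))))))) := by
            rw [hyw (xp * w)]
        _ = y * (d1 * (z * (y * (xp * (y * (yi * (y * (xp * w)))))))) := tPw (y * (xp * w))
        _ = y * (d1 * (z * (y * (xp * (y * (xp * w)))))) := by rw [hyw (xp * w)]
        _ = y * (d1 * (z * (y * (xp * w)))) := by rw [heew w]
    have β4 : y * (xp * (y * (d1 * (z * y)))) = y * (d1 * (z * x)) := by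
      calc y * (xp * (y * (d1 * (z * y))))
          = y * (xp * (y * (d1 * (z * (y * (yi * y)))))) := by rw [hy1]
        _ = y * (d1 * (z * (y * (xp * (y * (yi * y)))))) := tPw y
        _ = y * (d1 * (z * (y * (xp * y)))) := by rw [hy1]
        _ = y * (d1 * (z * x)) := by rw [hyx'y]
    have pE : y * (xp * (y * (d1 * (z * x)))) = y * (d1 * (z * x)) := by
      have := tMw y
      rw [hyx'y] at this
      exact this
    have pZ : z * (y * (d1 * (z * x))) = z * x := by
      rw [← P4, hd1w (xp * x)]
    have γL : ((z * x) * (yi * ((y * (d1 * z)) * zi))) * (z * x) = z * x := by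
      calc ((z * x) * (yi * ((y * (d1 * z)) * zi))) * (z * x)
          = z * (x * (yi * (y * (d1 * (z * (zi * (z * x))))))) := by simp only [mul_assoc]
        _ = z * (x * (yi * (y * (d1 * (z * x))))) := by rw [hzw]
        _ = z * (y * (xp * (y * (yi * (y * (d1 * (z * x))))))) := by
            rw [hyx'yw (yi * (y * (d1 * (z * x))))]
        _ = z * (y * (xp * (y * (d1 * (z * x))))) := by rw [hyw (d1 * (z * x))]
        _ = z * (y * (d1 * (z * x))) := by rw [pE]
        _ = z * x := pZ
    have G4L : ((z * x) * (yi * ((y * (d1 * z)) * zi))) * (z * y) = z * x := by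
      calc ((z * x) * (yi * ((y * (d1 * z)) * zi))) * (z * y)
          = z * (x * (yi * (y * (d1 * (z * (zi * (z * y))))))) := by simp only [mul_assoc]
        _ = z * (x * (yi * (y * (d1 * (z * y))))) := by rw [hzw]
        _ = z * (y * (xp * (y * (yi * (y * (d1 * (z * y))))))) := by
            rw [hyx'yw (yi * (y * (d1 * (z * y))))]
        _ = z * (y * (xp * (y * (d1 * (z * y))))) := by rw [hyw (d1 * (z * y))]
        _ = z * (y * (d1 * (z * x))) := by rw [β4]
        _ = z * x := pZ
    have G1L : ((z * x) * (yi * ((y * (d1 * z)) * zi)))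
        * ((z * x) * (yi * ((y * (d1 * z)) * zi)))
        = (z * x) * (yi * ((y * (d1 * z)) * zi)) := by
      rw [← mul_assoc, γL]
    exact ⟨Or.inr ⟨xp * x, c1L.symm⟩,
      (z * x) * (yi * ((y * (d1 * z)) * zi)), G1L, γL, Or.inr ⟨yi * ((y * (d1 * z)) * zi), rfl⟩,
      G4L.symm⟩

end Aux4
end Aux

/-- For a regular semigroup `S` the following are equivalent:
(i) `ω(e)` is a semilattice for every idempotent `e` (local inversion);
(ii) every sandwich set `S(e,f)` is a singleton;
(iii) the natural partial order is compatible with multiplication. -/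
theorem locally_inverse_tfae {S : Type*} [Semigroup S]
    (hreg : ∀ x : S, ∃ y : S, x * y * x = x) :
    ((∀ e f g : S, e * e = e → f * f = f → g * g = g →
        e * f = f → f * e = f → e * g = g → g * e = g → f * g = g * f) ↔
      (∀ e f : S, e * e = e → f * f = f →
        ∃! h : S, h * h = h ∧ h * e = h ∧ f * h = h ∧ e * f = e * h * f)) ∧
    ((∀ e f : S, e * e = e → f * f = f →
        ∃! h : S, h * h = h ∧ h * e = h ∧ f * h = h ∧ e * f = e * h * f) ↔
      (∀ x y z : S, natLe x y → natLe (x * z) (y * z) ∧ natLe (z * x) (z * y))) := by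
  refine ⟨⟨fun Hi => imp12 hreg Hi, fun Hii => imp21 hreg Hii⟩,
    ⟨fun Hii => imp13 hreg (imp21 hreg Hii), fun Hiii => imp12 hreg (imp31 Hiii)⟩⟩
end

section
/- Let S be a regular semigroup and let x ∈ S be a product of finitely many idempotents of S. Then there exist idempotents f₁, f₂, …, fₘ of S forming an E-chain (each consecutive pair is R-related or L-related) such that x = f₁f₂⋯fₘ. -/
/-- Right-associated product of `e :: l`. -/
def prS {S : Type*} [Mul S] (e : S) : List S → S
  | [] => e
  | e' :: r => e * prS e' r

lemma prS_mul {S : Type*} [Semigroup S] (u v : S) (l : List S) :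
    prS (u * v) l = u * prS v l := by
  cases l with
  | nil => rfl
  | cons e' r => show (u * v) * prS e' r = u * (v * prS e' r); rw [mul_assoc]

lemma foldl_eq_prS {S : Type*} [Semigroup S] (l : List S) (a : S) :
    l.foldl (· * ·) a = prS a l := by
  induction l generalizing a with
  | nil => rfl
  | cons e r ih =>
      show r.foldl (· * ·) (a * e) = a * prS e r
      rw [ih, prS_mul]

lemma foldl_mul_left {S : Type*} [Semigroup S] (l : List S) (w a : S) :
    l.foldl (· * ·) (w * a) = w * l.foldl (· * ·) a := by
  rw [foldl_eq_prS, foldl_eq_prS, prS_mul]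

lemma echain_aux {S : Type*} [Semigroup S] (x y : S) (hy2 : y * x * y = y) :
    ∀ (rest : List S) (e p : S), e * e = e → (∀ z ∈ rest, z * z = z) →
      p * e = p → p * prS e rest = x →
      ∃ m : List S, (∀ z ∈ (prS e rest * y * p) :: m, z * z = z) ∧
        List.Chain (fun p q => (p * q = q ∧ q * p = p) ∨ (p * q = p ∧ q * p = q))
          (prS e rest * y * p) m ∧
        m.foldl (· * ·) (prS e rest * y * p) = prS e rest * y * x := by
  have key : ∀ u p q v : S, p * q = x → (u * y * p) * (q * y * v) = u * y * v := by
    intro u p q v h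
    have h1 : (u * y * p) * (q * y * v) = u * (y * (p * q) * y) * v := by
      simp only [mul_assoc]
    rw [h1, h, hy2]
  intro rest
  induction rest with
  | nil =>
      intro e p he _ hpe hx
      have hp : p = x := hpe.symm.trans hx
      subst hp
      refine ⟨[], ?_, List.Chain.nil, ?_⟩
      · intro z hz
        simp only [List.mem_singleton] at hz
        subst hz
        exact key e p e p hx
      · rfl
  | cons e' rest' ih =>
      intro e p he hrest hpe hx
      have he' : e' * e' = e' := hrest e' (by simp)
      have hrest' : ∀ z ∈ rest', z * z = z := fun z hz => hrest z (by simp [hz])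
      -- abbreviations
      set Pl := prS e (e' :: rest') with hPl
      set Pr := prS e' rest' with hPr
      have hPle : Pl = e * Pr := rfl
      have hpPl : p * Pl = x := hx
      have hpPr : p * Pr = x := by
        calc p * Pr = (p * e) * Pr := by rw [hpe]
          _ = p * Pl := by rw [mul_assoc, hPle]
          _ = x := hpPl
      set p' := p * e' with hp'
      have hp'e' : p' * e' = p' := by rw [hp', mul_assoc, he']
      have hp'Pr : p' * Pr = x := by
        have h1 : e' * Pr = Pr := by
          rw [hPr, ← prS_mul, he']
        rw [hp', mul_assoc, h1, hpPr]
      obtain ⟨m', hm'idem, hm'chain, hm'prod⟩ :=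
        ih e' p' he' hrest' hp'e' hp'Pr
      set f := Pl * y * p with hf
      set g := Pr * y * p with hg
      set f' := Pr * y * p' with hf'
      have hff : f * f = f := key Pl p Pl p hpPl
      have hgg : g * g = g := key Pr p Pr p hpPr
      have hfg : f * g = f := key Pl p Pr p hpPr
      have hgf : g * f = g := key Pr p Pl p hpPl
      have hgf' : g * f' = f' := key Pr p Pr p' hpPr
      have hf'g : f' * g = g := key Pr p' Pr p hp'Pr
      refine ⟨g :: f' :: m', ?_, ?_, ?_⟩
      · intro z hz
        simp only [List.mem_cons] at hz
        rcases hz with h | h | h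
        · subst h; exact hff
        · subst h; exact hgg
        · exact hm'idem z (List.mem_cons.mpr h)
      · exact List.Chain.cons (Or.inr ⟨hfg, hgf⟩)
          (List.Chain.cons (Or.inl ⟨hgf', hf'g⟩) hm'chain)
      · show List.foldl (· * ·) f (g :: f' :: m') = Pl * y * x
        have h1 : List.foldl (· * ·) f (g :: f' :: m')
            = List.foldl (· * ·) (f * f') m' := by
          show List.foldl (· * ·) ((f * g) * f') m' = _
          rw [hfg]
        rw [h1, foldl_mul_left, hm'prod]
        exact key Pl p Pr x hpPr

/-- In a regular semigroup, every product of finitely many idempotents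
which is itself written as a product `a * b₁ * ⋯ * bₖ` of idempotents can be
rewritten as a product of an E-chain of idempotents. -/
theorem product_of_idempotents_echain {S : Type*} [Semigroup S]
    (hreg : ∀ x : S, ∃ y : S, x * y * x = x) (x : S)
    (hx : ∃ (a : S) (l : List S), (∀ z ∈ a :: l, z * z = z) ∧
      x = l.foldl (· * ·) a) :
    ∃ (b : S) (m : List S), (∀ z ∈ b :: m, z * z = z) ∧
      List.Chain (fun p q => (p * q = q ∧ q * p = p) ∨ (p * q = p ∧ q * p = q)) b m ∧
      x = m.foldl (· * ·) b := by
  obtain ⟨a, l, hall, hxl⟩ := hx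
  obtain ⟨y₀, hy₀⟩ := hreg x
  set y := y₀ * x * y₀ with hy
  have hy1 : x * y * x = x := by
    calc x * (y₀ * x * y₀) * x = (x * y₀ * x) * (y₀ * x) := by simp only [mul_assoc]
      _ = x * (y₀ * x) := by rw [hy₀]
      _ = x := by rw [← mul_assoc]; exact hy₀
  have hy2 : y * x * y = y := by
    show (y₀ * x * y₀) * x * (y₀ * x * y₀) = y₀ * x * y₀
    calc (y₀ * x * y₀) * x * (y₀ * x * y₀)
        = y₀ * ((x * y₀ * x) * (y₀ * (x * y₀))) := by simp only [mul_assoc]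
      _ = y₀ * (x * (y₀ * (x * y₀))) := by rw [hy₀]
      _ = y₀ * ((x * y₀ * x) * y₀) := by simp only [mul_assoc]
      _ = y₀ * (x * y₀) := by rw [hy₀]
      _ = y₀ * x * y₀ := by rw [mul_assoc]
  have ha : a * a = a := hall a (by simp)
  have hl : ∀ z ∈ l, z * z = z := fun z hz => hall z (by simp [hz])
  have hprx : prS a l = x := by rw [← foldl_eq_prS]; exact hxl.symm
  have hax : a * prS a l = x := by
    rw [← prS_mul, ha, hprx]
  obtain ⟨m, hmidem, hmchain, hmprod⟩ := echain_aux x y hy2 l a a ha hl ha hax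
  refine ⟨prS a l * y * a, m, hmidem, hmchain, ?_⟩
  rw [hmprod, hprx]
  exact hy1.symm
end

section
/- Let H be a complex Hilbert space and let f : H → H be a bounded (continuous) linear operator of finite rank, i.e. with finite-dimensional range. Then there exists a bounded linear operator g : H → H of finite rank such that f ∘ g ∘ f = f, g ∘ f ∘ g = g, and both f ∘ g and g ∘ f are self-adjoint; that is, the Moore–Penrose inverse of a finite-rank operator exists and is again of finite rank. -/
/-!
Let `K` be the range of `f`; it is finite-dimensional, hence closed. The compression `T` of
`f f†` to `K` is injective, since `ker (f f†) = ker f† = Kᗮ`, so it is invertible. Then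
`h = T⁻¹ ∘ proj_K` is self-adjoint, `f f† h` is the orthogonal projection `p` onto `K` and
`h p = h`, and these identities alone make `g = f† h` a Moore–Penrose inverse of `f`
(this is `f⁺ = f† (f f†)⁺`). The range of `g` lies in `f† K`, which is finite-dimensional.
-/

open scoped InnerProduct Ring

structure IsMoorePenroseInverse {R : Type*} [Mul R] [Star R] (a b : R) : Prop where
  mul_inv_mul : a * b * a = a
  inv_mul_inv : b * a * b = b
  isSelfAdjoint_mul_inv : IsSelfAdjoint (a * b)
  isSelfAdjoint_inv_mul : IsSelfAdjoint (b * a)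

theorem isMoorePenroseInverse_star_mul {R : Type*} [Monoid R] [StarMul R] {a h p : R}
    (hh : IsSelfAdjoint h) (hp : IsSelfAdjoint p) (hah : a * star a * h = p) (hhp : h * p = h)
    (hpa : p * a = a) : IsMoorePenroseInverse a (star a * h) where
  mul_inv_mul := by rw [← mul_assoc, hah, hpa]
  inv_mul_inv := by
    rw [show star a * h * a * (star a * h) = star a * (h * (a * star a * h)) by
      simp only [mul_assoc], hah, hhp]
  isSelfAdjoint_mul_inv := by rwa [← mul_assoc, hah]
  isSelfAdjoint_inv_mul := by
    simp only [IsSelfAdjoint, star_mul, star_star, hh.star_eq, mul_assoc]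

namespace Submodule

variable {𝕜 E G : Type*} [RCLike 𝕜] [NormedAddCommGroup E] [InnerProductSpace 𝕜 E]
  [NormedAddCommGroup G] [InnerProductSpace 𝕜 G]

theorem starProjection_comp_of_range_le (U : Submodule 𝕜 E) [U.HasOrthogonalProjection]
    (A : G →L[𝕜] E) (hA : LinearMap.range (A : G →ₗ[𝕜] E) ≤ U) : U.starProjection ∘L A = A := by
  ext x
  exact starProjection_eq_self_iff.mpr (hA ⟨x, rfl⟩)

end Submodule

namespace ContinuousLinearMap

variable {𝕜 E F : Type*} [RCLike 𝕜] [NormedAddCommGroup E] [InnerProductSpace 𝕜 E]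
  [NormedAddCommGroup F] [InnerProductSpace 𝕜 F] [CompleteSpace E] [CompleteSpace F]

theorem isUnit_compression_self_comp_adjoint (f : E →L[𝕜] F)
    [FiniteDimensional 𝕜 (LinearMap.range (f : E →ₗ[𝕜] F))] :
    IsUnit ((LinearMap.range (f : E →ₗ[𝕜] F)).orthogonalProjectionOnto ∘L (f ∘L f†) ∘L
      (LinearMap.range (f : E →ₗ[𝕜] F)).subtypeL) := by
  set K := LinearMap.range (f : E →ₗ[𝕜] F)
  rw [isUnit_iff_isUnit_toLinearMap, LinearMap.isUnit_iff_ker_eq_bot, LinearMap.ker_eq_bot']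
  intro x hx
  have hK : K.starProjection ∘L (f ∘L f†) = f ∘L f† :=
    K.starProjection_comp_of_range_le _ (LinearMap.range_comp_le_range _ _)
  have hx' : x.1 ∈ (f ∘L f†).ker := by
    rw [LinearMap.mem_ker, ← hK]
    exact congrArg Subtype.val hx
  rw [ker_self_comp_adjoint, ← orthogonal_range] at hx'
  exact Subtype.ext (Submodule.inf_orthogonal_eq_bot K |>.le ⟨x.2, hx'⟩)

theorem exists_pseudoinverse_self_comp_adjoint (f : E →L[𝕜] F)
    [FiniteDimensional 𝕜 (LinearMap.range (f : E →ₗ[𝕜] F))] :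
    ∃ h : F →L[𝕜] F, IsSelfAdjoint h ∧
      (f ∘L f†) ∘L h = (LinearMap.range (f : E →ₗ[𝕜] F)).starProjection ∧
      h ∘L (LinearMap.range (f : E →ₗ[𝕜] F)).starProjection = h ∧
      LinearMap.range (h : F →ₗ[𝕜] F) ≤ LinearMap.range (f : E →ₗ[𝕜] F) := by
  set K := LinearMap.range (f : E →ₗ[𝕜] F)
  set T := K.orthogonalProjectionOnto ∘L (f ∘L f†) ∘L K.subtypeL
  have hT : IsSelfAdjoint T := by
    simpa [K.adjoint_subtypeL] using
      (isPositive_self_comp_adjoint f).isSelfAdjoint.adjoint_conj K.subtypeL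
  have hTT : T * T⁻¹ʳ = 1 := Ring.mul_inverse_cancel _ (isUnit_compression_self_comp_adjoint f)
  have hfT : (f ∘L f†) ∘L K.subtypeL = K.subtypeL ∘L T := by
    conv_lhs =>
      rw [← K.starProjection_comp_of_range_le (f ∘L f†) (LinearMap.range_comp_le_range _ _)]
    rfl
  refine ⟨K.subtypeL ∘L T⁻¹ʳ ∘L K.orthogonalProjectionOnto, ?_, ?_, ?_, ?_⟩
  · simpa [K.adjoint_subtypeL] using hT.ringInverse.conj_adjoint K.subtypeL
  · rw [← comp_assoc, hfT, comp_assoc, ← comp_assoc T, ← mul_def, hTT, one_def, id_comp]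
    rfl
  · ext x
    simp only [Submodule.starProjection, comp_apply, Submodule.subtypeL_apply,
      Submodule.orthogonalProjectionOnto_mem_subspace_eq_self]
    rfl
  · rintro _ ⟨x, rfl⟩
    exact (T⁻¹ʳ (K.orthogonalProjectionOnto x)).2

theorem exists_isMoorePenroseInverse_of_finiteDimensional_range (f : E →L[𝕜] E)
    [FiniteDimensional 𝕜 (LinearMap.range (f : E →ₗ[𝕜] E))] :
    ∃ g : E →L[𝕜] E, FiniteDimensional 𝕜 (LinearMap.range (g : E →ₗ[𝕜] E)) ∧
      IsMoorePenroseInverse f g := by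
  obtain ⟨h, hh, hfh, hhp, hrange⟩ := exists_pseudoinverse_self_comp_adjoint f
  refine ⟨f† ∘L h, ?_, isMoorePenroseInverse_star_mul hh (isSelfAdjoint_starProjection _) hfh hhp
    (Submodule.starProjection_comp_of_range_le _ f le_rfl)⟩
  have hle : LinearMap.range (f† ∘L h : E →ₗ[𝕜] E) ≤
      (LinearMap.range (f : E →ₗ[𝕜] E)).map (f† : E →ₗ[𝕜] E) :=
    (LinearMap.range_comp (h : E →ₗ[𝕜] E) (f† : E →ₗ[𝕜] E)).le.trans (Submodule.map_mono hrange)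
  exact Submodule.finiteDimensional_of_le hle

end ContinuousLinearMap

/-- Every finite-rank bounded operator on a complex Hilbert space has
a Moore–Penrose inverse, which is again of finite rank. -/
theorem finite_rank_moore_penrose {H : Type*}
    [NormedAddCommGroup H] [InnerProductSpace ℂ H] [CompleteSpace H]
    (f : H →L[ℂ] H) (hf : FiniteDimensional ℂ (LinearMap.range (f : H →ₗ[ℂ] H))) :
    ∃ g : H →L[ℂ] H, FiniteDimensional ℂ (LinearMap.range (g : H →ₗ[ℂ] H)) ∧
      f.comp (g.comp f) = f ∧ g.comp (f.comp g) = g ∧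
      ContinuousLinearMap.adjoint (f.comp g) = f.comp g ∧
      ContinuousLinearMap.adjoint (g.comp f) = g.comp f := by
  obtain ⟨g, hg, hfg⟩ := f.exists_isMoorePenroseInverse_of_finiteDimensional_range
  exact ⟨g, hg, hfg.mul_inv_mul, hfg.inv_mul_inv, hfg.isSelfAdjoint_mul_inv,
    hfg.isSelfAdjoint_inv_mul⟩
end

section
/- Let H be a complex Hilbert space and let f : H → H be a bounded linear operator of finite rank. Then f is unit regular in the semigroup of bounded operators on H: there exists a continuous linear automorphism u of H (an invertible bounded operator with bounded inverse) such that f ∘ u ∘ f = f. -/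
/-!
A finite-rank operator `f` is determined by its restriction `T` to a finite-dimensional subspace
`V` containing its range and mapping onto it. In finite dimension `T` is unit regular: a right
inverse of `T` on its range is injective, and by counting dimensions of complements it extends to
an automorphism `ψ` of `V`. Finally `ψ` extends to a continuous automorphism of `H` acting as the
identity on a closed complement of `V`, which exists by Hahn–Banach.
-/

open LinearMap

theorem LinearMap.exists_comp_eq_range_subtype {K E F : Type*} [DivisionRing K] [AddCommGroup E]
    [Module K E] [AddCommGroup F] [Module K F] (f : E →ₗ[K] F) :
    ∃ s : range f →ₗ[K] E, f ∘ₗ s = (range f).subtype := by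
  obtain ⟨s, hs⟩ := f.rangeRestrict.exists_rightInverse_of_surjective f.range_rangeRestrict
  exact ⟨s, ext fun y => congr($(DFunLike.congr_fun hs y).val)⟩

theorem Submodule.exists_linearEquiv_extend {K V : Type*} [DivisionRing K] [AddCommGroup V]
    [Module K V] [FiniteDimensional K V] (W : Submodule K V) (j : W →ₗ[K] V)
    (hj : Function.Injective j) : ∃ φ : V ≃ₗ[K] V, ∀ w : W, φ w = j w := by
  obtain ⟨W', hW'⟩ := W.exists_isCompl
  obtain ⟨R', hR'⟩ := (range j).exists_isCompl
  let e : W ≃ₗ[K] range j := LinearEquiv.ofInjective j hj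
  have e' : W' ≃ₗ[K] R' := LinearEquiv.ofFinrankEq _ _ <| by
    have := W.finrank_add_eq_of_isCompl hW'
    have := (range j).finrank_add_eq_of_isCompl hR'
    have := e.finrank_eq
    omega
  refine ⟨(W.prodEquivOfIsCompl W' hW').symm ≪≫ₗ e.prodCongr e' ≪≫ₗ
    (range j).prodEquivOfIsCompl R' hR', fun w => ?_⟩
  simp [e]

theorem LinearMap.exists_linearEquiv_comp_comp_eq_self {K V : Type*} [DivisionRing K]
    [AddCommGroup V] [Module K V] [FiniteDimensional K V] (T : V →ₗ[K] V) :
    ∃ ψ : V ≃ₗ[K] V, T ∘ₗ ψ.toLinearMap ∘ₗ T = T := by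
  obtain ⟨s, hs⟩ := T.exists_comp_eq_range_subtype
  have hTs (y : range T) : T (s y) = y := DFunLike.congr_fun hs y
  have hs_inj : Function.Injective s := fun y y' h => Subtype.ext <| by
    rw [← hTs y, ← hTs y', h]
  obtain ⟨ψ, hψ⟩ := (range T).exists_linearEquiv_extend s hs_inj
  refine ⟨ψ, ext fun x => ?_⟩
  simpa [← hψ] using hTs ⟨T x, mem_range_self T x⟩

theorem LinearMap.exists_finiteDimensional_range_le_map {K E : Type*} [DivisionRing K]
    [AddCommGroup E] [Module K E] (f : E →ₗ[K] E) [FiniteDimensional K (range f)] :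
    ∃ V : Submodule K E, FiniteDimensional K V ∧ range f ≤ V ∧ range f ≤ V.map f := by
  obtain ⟨s, hs⟩ := f.exists_comp_eq_range_subtype
  refine ⟨range f ⊔ range s, inferInstance, le_sup_left,
    fun y hy => ⟨s ⟨y, hy⟩, ?_, ?_⟩⟩
  · exact (le_sup_right : range s ≤ _) (mem_range_self s _)
  · exact DFunLike.congr_fun hs ⟨y, hy⟩

theorem Submodule.ClosedComplemented.exists_continuousLinearEquiv_extend {R M : Type*} [Ring R]
    [TopologicalSpace M] [AddCommGroup M] [IsTopologicalAddGroup M] [Module R M]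
    {V : Submodule R M} (hV : V.ClosedComplemented) (ψ : V ≃L[R] V) :
    ∃ u : M ≃L[R] M, ∀ v : V, u v = ψ v := by
  obtain ⟨W, e, he, -, he'⟩ := hV.exists_submodule_equiv_prod
  exact ⟨e.trans ((ψ.prodCongr (.refl R W)).trans e.symm), fun v => by simp [he, he']⟩

theorem finite_rank_unit_regular_general {H : Type*}
    [NormedAddCommGroup H] [InnerProductSpace ℂ H]
    (f : H →L[ℂ] H) (hf : FiniteDimensional ℂ (LinearMap.range (f : H →ₗ[ℂ] H))) :
    ∃ u : H ≃L[ℂ] H, f.comp ((u : H →L[ℂ] H).comp f) = f := by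
  obtain ⟨V, hV, hrange, hmap⟩ := (f : H →ₗ[ℂ] H).exists_finiteDimensional_range_le_map
  let T : V →ₗ[ℂ] V := (f : H →ₗ[ℂ] H).restrict fun x _ => hrange (mem_range_self _ x)
  obtain ⟨ψ, hψ⟩ := T.exists_linearEquiv_comp_comp_eq_self
  obtain ⟨u, hu⟩ := Submodule.ClosedComplemented.exists_continuousLinearEquiv_extend
    (.of_finiteDimensional V) ψ.toContinuousLinearEquiv
  refine ⟨u, ContinuousLinearMap.ext fun x => ?_⟩
  obtain ⟨v, hv, hfv⟩ := hmap (mem_range_self _ x)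
  have hTψT := congr(($(DFunLike.congr_fun hψ ⟨v, hv⟩) : H))
  change f (u (f x)) = f x
  rw [← show f v = f x from hfv, hu ⟨f v, hrange (mem_range_self _ v)⟩]
  exact hTψT

/-- Every finite-rank bounded operator on a complex Hilbert space is
unit regular: `f ∘ u ∘ f = f` for some continuous linear automorphism `u` of `H`. -/
theorem finite_rank_unit_regular {H : Type*}
    [NormedAddCommGroup H] [InnerProductSpace ℂ H] [CompleteSpace H]
    (f : H →L[ℂ] H) (hf : FiniteDimensional ℂ (LinearMap.range (f : H →ₗ[ℂ] H))) :
    ∃ u : H ≃L[ℂ] H, f.comp ((u : H →L[ℂ] H).comp f) = f :=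
  finite_rank_unit_regular_general f hf
end

section
/- Let H be an infinite-dimensional complex Hilbert space and let f : H → H be a bounded linear operator of finite rank. Then f is a product of finitely many idempotent bounded linear operators of finite rank on H; that is, the semigroup of finite-rank operators on H is idempotent-generated. -/
/-! With `K = ker f` (closed, of finite codimension) and `R = range f`: since `K` is
infinite-dimensional, a complement `M` of `K` can be tilted to the graph `X` of an injective map
`M → K` whose range avoids `R ⊔ M`, giving a finite-dimensional complement `X` of `K` with
`X ⊓ R = ⊥`. The continuous projection `g` onto `X` along `K` satisfies `f ∘ g = f`. As `X` and
`R` are independent, the map that is `f` on `X` and the identity on `R` extends (Hahn–Banach) to a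
continuous `e` with range in `R`; it is idempotent and `e ∘ g = f ∘ g = f`. -/

open Submodule Module Function

section VectorSpace

variable {K V : Type*} [DivisionRing K] [AddCommGroup V] [Module K V]

theorem exists_injective_disjoint_range (hV : ¬ FiniteDimensional K V) (D : Submodule K V)
    [FiniteDimensional K D] (M : Type*) [AddCommGroup M] [Module K M] [FiniteDimensional K M] :
    ∃ s : M →ₗ[K] V, Injective s ∧ Disjoint (LinearMap.range s) D := by
  obtain ⟨C, hDC⟩ := D.exists_isCompl
  have hC : ¬ FiniteDimensional K C := fun _ =>
    hV ((prodEquivOfIsCompl D C hDC).finiteDimensional)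
  obtain ⟨t, ht⟩ : ∃ t : M →ₗ[K] C, Injective t := by
    refine lift_rank_le_iff_exists_linearMap.mp (le_of_lt ?_)
    refine lt_of_lt_of_le (Cardinal.lift_lt_aleph0.mpr (Module.rank_lt_aleph0_iff.mpr ‹_›)) ?_
    exact Cardinal.aleph0_le_lift.mpr (not_lt.mp (mt Module.rank_lt_aleph0_iff.mp hC))
  refine ⟨C.subtype ∘ₗ t, C.injective_subtype.comp ht, hDC.disjoint.symm.mono_left ?_⟩
  rw [LinearMap.range_comp]
  exact map_subtype_le C _

theorem isCompl_range_subtype_add {N M : Submodule K V} (h : IsCompl N M) (t : M →ₗ[K] V)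
    (ht : LinearMap.range t ≤ N) : IsCompl N (LinearMap.range (M.subtype + t)) := by
  have htN (m : M) : t m ∈ N := ht (LinearMap.mem_range_self t m)
  constructor
  · rw [disjoint_def]
    rintro _ hmN ⟨m, rfl⟩
    have hm : (m : V) ∈ N := by simpa using N.sub_mem hmN (htN m)
    have : m = 0 := Subtype.ext (disjoint_def.mp h.disjoint m hm m.2)
    simp [this]
  · rw [codisjoint_iff, eq_top_iff]
    rintro v -
    obtain ⟨n, hn, m, hm, rfl⟩ := mem_sup.mp (h.codisjoint.eq_top ▸ mem_top : v ∈ N ⊔ M)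
    have hv : n + m = (n - t ⟨m, hm⟩) + (M.subtype + t) ⟨m, hm⟩ := by simp
    rw [hv]
    exact add_mem_sup (N.sub_mem hn (htN _)) (LinearMap.mem_range_self _ _)

theorem exists_isCompl_disjoint (hV : ¬ FiniteDimensional K V) (N : Submodule K V)
    [FiniteDimensional K (V ⧸ N)] (R : Submodule K V) [FiniteDimensional K R] :
    ∃ X : Submodule K V, IsCompl N X ∧ Disjoint X R := by
  obtain ⟨M, hNM⟩ := N.exists_isCompl
  have : FiniteDimensional K M := (quotientEquivOfIsCompl N M hNM).finiteDimensional
  have hN : ¬ FiniteDimensional K N := fun _ =>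
    hV ((prodEquivOfIsCompl N M hNM).finiteDimensional)
  have : FiniteDimensional K ((R ⊔ M).comap N.subtype) :=
    have := finiteDimensional_of_le (map_comap_le N.subtype (R ⊔ M))
    (equivMapOfInjective _ N.injective_subtype _).symm.finiteDimensional
  obtain ⟨s, hs, hsRM⟩ := exists_injective_disjoint_range hN ((R ⊔ M).comap N.subtype) M
  refine ⟨_, isCompl_range_subtype_add hNM (N.subtype ∘ₗ s) ?_, ?_⟩
  · rw [LinearMap.range_comp]
    exact map_subtype_le N _
  · rw [disjoint_def]
    rintro _ ⟨m, rfl⟩ hmR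
    have hsm : (s m : V) ∈ R ⊔ M := by
      have : (s m : V) = (M.subtype + N.subtype ∘ₗ s) m - m := by simp
      rw [this]
      exact sub_mem (mem_sup_left hmR) (mem_sup_right m.2)
    have : s m = 0 := disjoint_def.mp hsRM _ (LinearMap.mem_range_self s m) hsm
    have : m = 0 := hs (by simpa using this)
    simp [this]

end VectorSpace

section NormedSpace

variable {𝕜 E : Type*} [RCLike 𝕜] [NormedAddCommGroup E] [NormedSpace 𝕜 E]

theorem exists_isIdempotentElem_range_le_of_disjoint {X R : Submodule 𝕜 E}
    [FiniteDimensional 𝕜 X] [FiniteDimensional 𝕜 R] (hXR : Disjoint X R) (T : X →ₗ[𝕜] R) :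
    ∃ e : E →L[𝕜] E, IsIdempotentElem e ∧ LinearMap.range (e : E →ₗ[𝕜] E) ≤ R ∧
      ∀ x : X, e x = T x := by
  let c : X × R →ₗ[𝕜] E := X.subtype.coprod R.subtype
  have hc : Injective c := by
    rw [← LinearMap.ker_eq_bot,
      LinearMap.ker_coprod_of_disjoint_range X.subtype R.subtype (by simpa using hXR)]
    simp
  let φ : LinearMap.range c →ₗ[𝕜] R :=
    T.coprod LinearMap.id ∘ₗ (LinearEquiv.ofInjective c hc).symm
  obtain ⟨e₀, he₀⟩ := φ.toContinuousLinearMap.exist_extension_of_finiteDimensional_range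
  have he₀ (p : X × R) : e₀ (c p) = T p.1 + p.2 := by
    have := congr($he₀ (LinearEquiv.ofInjective c hc p))
    simpa [φ] using this.symm
  have he₀X (x : X) : e₀ x = T x := by simpa [c] using he₀ (x, 0)
  have he₀R (r : R) : e₀ r = r := by simpa [c] using he₀ (0, r)
  refine ⟨R.subtypeL ∘L e₀, ?_, ?_, fun x => congrArg Subtype.val (he₀X x)⟩
  · ext v
    simp [he₀R]
  · rintro _ ⟨v, rfl⟩
    exact (e₀ v).2

theorem exists_isIdempotentElem_comp_eq_disjoint {F : Type*} [NormedAddCommGroup F]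
    [NormedSpace 𝕜 F] (hE : ¬ FiniteDimensional 𝕜 E) (f : E →L[𝕜] F)
    [FiniteDimensional 𝕜 (LinearMap.range (f : E →ₗ[𝕜] F))] (R : Submodule 𝕜 E)
    [FiniteDimensional 𝕜 R] :
    ∃ g : E →L[𝕜] E, IsIdempotentElem g ∧
      FiniteDimensional 𝕜 (LinearMap.range (g : E →ₗ[𝕜] E)) ∧
      Disjoint (LinearMap.range (g : E →ₗ[𝕜] E)) R ∧ f ∘L g = f := by
  have : FiniteDimensional 𝕜 (E ⧸ LinearMap.ker (f : E →ₗ[𝕜] F)) :=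
    (f : E →ₗ[𝕜] F).quotKerEquivRange.symm.finiteDimensional
  obtain ⟨X, hKX, hXR⟩ := exists_isCompl_disjoint hE (LinearMap.ker (f : E →ₗ[𝕜] F)) R
  have : FiniteDimensional 𝕜 X := (quotientEquivOfIsCompl _ X hKX).finiteDimensional
  have h : IsTopCompl (LinearMap.ker (f : E →ₗ[𝕜] F)) X :=
    hKX.isTopCompl_of_isClosed_of_finiteDimensional f.isClosed_ker
  refine ⟨X.projectionL _ h.symm, isIdempotentElem_projectionL _, ?_, ?_, ?_⟩
  · rw [range_projectionL]; infer_instance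
  · rwa [range_projectionL]
  · ext v
    have hker : f (LinearMap.ker (f : E →ₗ[𝕜] F) |>.projectionL X h v) = 0 :=
      projectionL_apply_mem h v
    conv_rhs => rw [← projectionL_add_projectionL_eq_self h.symm v]
    rw [map_add, hker, add_zero, ContinuousLinearMap.comp_apply]

end NormedSpace

theorem finite_rank_idempotent_generated_general {H : Type*}
    [NormedAddCommGroup H] [InnerProductSpace ℂ H]
    (hH : ¬ FiniteDimensional ℂ H)
    (f : H →L[ℂ] H) (hf : FiniteDimensional ℂ (LinearMap.range (f : H →ₗ[ℂ] H))) :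
    ∃ l : List (H →L[ℂ] H), l ≠ [] ∧
      (∀ e ∈ l, e.comp e = e ∧ FiniteDimensional ℂ (LinearMap.range (e : H →ₗ[ℂ] H))) ∧
      f = l.prod := by
  obtain ⟨g, hg, hgfin, hgR, hfg⟩ :=
    exists_isIdempotentElem_comp_eq_disjoint hH f (LinearMap.range (f : H →ₗ[ℂ] H))
  obtain ⟨e, he, heR, hef⟩ := exists_isIdempotentElem_range_le_of_disjoint hgR
    ((f : H →ₗ[ℂ] H).restrict fun _ _ => LinearMap.mem_range_self _ _)
  refine ⟨[e, g], by simp, ?_, ?_⟩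
  · simp only [List.mem_cons, List.not_mem_nil, or_false, forall_eq_or_imp, forall_eq]
    exact ⟨⟨he, finiteDimensional_of_le heR⟩, hg, hgfin⟩
  · rw [List.prod_cons, List.prod_singleton]
    conv_lhs => rw [← hfg]
    ext v
    exact (hef ⟨g v, LinearMap.mem_range_self _ v⟩).symm

/-- On an infinite-dimensional complex Hilbert space, every
finite-rank bounded operator is a product of finitely many idempotent finite-rank
bounded operators. -/
theorem finite_rank_idempotent_generated {H : Type*}
    [NormedAddCommGroup H] [InnerProductSpace ℂ H] [CompleteSpace H]
    (hH : ¬ FiniteDimensional ℂ H)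
    (f : H →L[ℂ] H) (hf : FiniteDimensional ℂ (LinearMap.range (f : H →ₗ[ℂ] H))) :
    ∃ l : List (H →L[ℂ] H), l ≠ [] ∧
      (∀ e ∈ l, e.comp e = e ∧ FiniteDimensional ℂ (LinearMap.range (e : H →ₗ[ℂ] H))) ∧
      f = l.prod :=
  finite_rank_idempotent_generated_general hH f hf
end

section
/- Let H be a complex Hilbert space and let e, f : H → H be idempotent bounded linear operators of finite rank with dim(im e) = dim(im f) (so e and f are D-related in the semigroup of finite-rank operators). Then e and f are connected by an E-chain of length at most 3: there exist idempotent finite-rank bounded operators g, h on H such that each of the consecutive pairs (e,g), (g,h), (h,f) is either R-related (for idempotents a, b: ab = b and ba = a) or L-related (ab = a and ba = b). -/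
/-!
Let `U = range e` and `V = range f`. If `C` is a common closed complement of `U` and `V`, the
continuous projections `g` onto `U` and `h` onto `V` along `C` give the chain `e R g L h R f`,
since idempotents with equal ranges are R-related and idempotents with equal kernels are
L-related. For `C` take a closed complement `D` of the finite-dimensional space `U ⊔ V`
(Hahn–Banach) enlarged by a common complement of `U` and `V` inside `U ⊔ V`.
-/

open Module Submodule

namespace Submodule

variable {K M : Type*}

theorem exists_mem_notMem_notMem_of_lt [Ring K] [AddCommGroup M] [Module K M]
    {p q r : Submodule K M} (hp : p < r) (hq : q < r) : ∃ x ∈ r, x ∉ p ∧ x ∉ q := by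
  obtain ⟨x, hxr, hxp⟩ := SetLike.exists_of_lt hp
  obtain ⟨y, hyr, hyq⟩ := SetLike.exists_of_lt hq
  by_cases hxq : x ∈ q
  · by_cases hyp : y ∈ p
    · exact ⟨x + y, r.add_mem hxr hyr, (p.add_mem_iff_left hyp).not.mpr hxp,
        (q.add_mem_iff_right hxq).not.mpr hyq⟩
    · exact ⟨y, hyr, hyp, hyq⟩
  · exact ⟨x, hxr, hxp, hxq⟩

variable [DivisionRing K] [AddCommGroup M] [Module K M]

theorem finrank_sup_span_singleton_of_notMem {p : Submodule K M} [FiniteDimensional K p]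
    {x : M} (hx : x ∉ p) : finrank K ↥(p ⊔ K ∙ x) = finrank K p + 1 := by
  have hx0 : x ≠ 0 := fun h => hx (h ▸ p.zero_mem)
  have := finrank_sup_add_finrank_inf_eq p (K ∙ x)
  rwa [(disjoint_span_singleton_of_notMem hx).eq_bot, finrank_bot, add_zero,
    finrank_span_singleton hx0] at this

/-- Induction on `finrank (U ⊔ V) - finrank U`: enlarge `U` and `V` by a common vector of `U ⊔ V`
lying in neither of them. -/
theorem exists_isCompl_sup_isCompl_sup_of_finrank_eq {U V D : Submodule K M}
    [FiniteDimensional K U] [FiniteDimensional K V] (hUV : finrank K U = finrank K V)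
    (hD : IsCompl (U ⊔ V) D) : ∃ C ≤ U ⊔ V, IsCompl U (C ⊔ D) ∧ IsCompl V (C ⊔ D) := by
  obtain ⟨n, hn⟩ : ∃ n, finrank K ↥(U ⊔ V) = finrank K U + n :=
    Nat.exists_eq_add_of_le (finrank_mono le_sup_left)
  induction n generalizing U V with
  | zero =>
    have hU : U = U ⊔ V := eq_of_le_of_finrank_eq le_sup_left hn.symm
    have hVU : V = U := eq_of_le_of_finrank_eq (hU ▸ le_sup_right) hUV.symm
    subst hVU
    exact ⟨⊥, bot_le, by simpa using hD, by simpa using hD⟩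
  | succ n ih =>
    have hU : U < U ⊔ V := lt_of_le_of_ne le_sup_left fun h => by
      rw [← h] at hn; omega
    have hV : V < U ⊔ V := lt_of_le_of_ne le_sup_right fun h => by
      rw [← h] at hn; omega
    obtain ⟨w, hw, hwU, hwV⟩ := exists_mem_notMem_notMem_of_lt hU hV
    have hsup : U ⊔ K ∙ w ⊔ (V ⊔ K ∙ w) = U ⊔ V := by
      rw [sup_sup_sup_comm, sup_idem, sup_eq_left.mpr ((span_singleton_le_iff_mem _ _).mpr hw)]
    have hrankU := finrank_sup_span_singleton_of_notMem hwU
    have hrankV := finrank_sup_span_singleton_of_notMem hwV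
    obtain ⟨C, hC, hUC, hVC⟩ := ih (U := U ⊔ K ∙ w) (V := V ⊔ K ∙ w) (by omega) (hsup ▸ hD)
      (by rw [hsup]; omega)
    refine ⟨K ∙ w ⊔ C, sup_le ((span_singleton_le_iff_mem _ _).mpr hw) (hsup ▸ hC), ?_, ?_⟩
    · rw [sup_assoc]
      exact (disjoint_span_singleton_of_notMem hwU).isCompl_sup_right_of_isCompl_sup_left hUC
    · rw [sup_assoc]
      exact (disjoint_span_singleton_of_notMem hwV).isCompl_sup_right_of_isCompl_sup_left hVC

end Submodule

theorem Submodule.exists_isTopCompl_isTopCompl_of_finrank_eq {𝕜 E : Type*} [RCLike 𝕜]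
    [NormedAddCommGroup E] [NormedSpace 𝕜 E] {U V : Submodule 𝕜 E}
    [FiniteDimensional 𝕜 U] [FiniteDimensional 𝕜 V] (hUV : finrank 𝕜 U = finrank 𝕜 V) :
    ∃ C : Submodule 𝕜 E, IsTopCompl U C ∧ IsTopCompl V C := by
  obtain ⟨D, hD, hUVD⟩ := (ClosedComplemented.of_finiteDimensional (U ⊔ V)).exists_isClosed_isCompl
  obtain ⟨C, hC, hUC, hVC⟩ := exists_isCompl_sup_isCompl_sup_of_finrank_eq hUV hUVD
  have : FiniteDimensional 𝕜 C := finiteDimensional_of_le hC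
  have hCD : IsClosed ((C ⊔ D : Submodule 𝕜 E) : Set E) :=
    sup_comm D C ▸ isClosed_sup_finiteDimensional D C hD
  exact ⟨C ⊔ D, (hUC.symm.isTopCompl_of_isClosed_of_finiteDimensional hCD).symm,
    (hVC.symm.isTopCompl_of_isClosed_of_finiteDimensional hCD).symm⟩

namespace ContinuousLinearMap.IsIdempotentElem

variable {R M : Type*} [Ring R] [TopologicalSpace M] [AddCommGroup M] [Module R M]
  {p q : M →L[R] M}

theorem comp_eq_right_of_range_le (hp : IsIdempotentElem p)
    (h : LinearMap.range (q : M →ₗ[R] M) ≤ LinearMap.range (p : M →ₗ[R] M)) : p.comp q = q :=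
  coe_inj.mp ((LinearMap.IsIdempotentElem.comp_eq_right_iff (toLinearMap hp) _).mpr h)

theorem comp_eq_left_of_ker_le (hq : IsIdempotentElem q)
    (h : LinearMap.ker (q : M →ₗ[R] M) ≤ LinearMap.ker (p : M →ₗ[R] M)) : p.comp q = p :=
  coe_inj.mp ((LinearMap.IsIdempotentElem.comp_eq_left_iff (toLinearMap hq) _).mpr h)

end ContinuousLinearMap.IsIdempotentElem

open ContinuousLinearMap.IsIdempotentElem in
theorem idempotents_echain_length_three_general {H : Type*}
    [NormedAddCommGroup H] [InnerProductSpace ℂ H]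
    (e f : H →L[ℂ] H)
    (he : e.comp e = e) (hf : f.comp f = f)
    (hre : FiniteDimensional ℂ (LinearMap.range (e : H →ₗ[ℂ] H)))
    (hrf : FiniteDimensional ℂ (LinearMap.range (f : H →ₗ[ℂ] H)))
    (hdim : Module.finrank ℂ (LinearMap.range (e : H →ₗ[ℂ] H)) = Module.finrank ℂ (LinearMap.range (f : H →ₗ[ℂ] H))) :
    ∃ g h : H →L[ℂ] H,
      g.comp g = g ∧ h.comp h = h ∧
      FiniteDimensional ℂ (LinearMap.range (g : H →ₗ[ℂ] H)) ∧
      FiniteDimensional ℂ (LinearMap.range (h : H →ₗ[ℂ] H)) ∧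
      ((e.comp g = g ∧ g.comp e = e) ∨ (e.comp g = e ∧ g.comp e = g)) ∧
      ((g.comp h = h ∧ h.comp g = g) ∨ (g.comp h = g ∧ h.comp g = h)) ∧
      ((h.comp f = f ∧ f.comp h = h) ∨ (h.comp f = h ∧ f.comp h = f)) := by
  obtain ⟨C, hUC, hVC⟩ := exists_isTopCompl_isTopCompl_of_finrank_eq hdim
  have hg := isIdempotentElem_projectionL hUC
  have hh := isIdempotentElem_projectionL hVC
  have hrg := range_projectionL hUC
  have hrh := range_projectionL hVC
  have hkgh : LinearMap.ker _ = LinearMap.ker _ :=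
    (ker_projectionL hUC).trans (ker_projectionL hVC).symm
  refine ⟨_, _, hg, hh, by rwa [hrg], by rwa [hrh],
    Or.inl ⟨comp_eq_right_of_range_le he hrg.le, comp_eq_right_of_range_le hg hrg.ge⟩,
    Or.inr ⟨comp_eq_left_of_ker_le hh hkgh.ge, comp_eq_left_of_ker_le hg hkgh.le⟩,
    Or.inl ⟨comp_eq_right_of_range_le hh hrh.ge, comp_eq_right_of_range_le hf hrh.le⟩⟩

/-- Two idempotent finite-rank bounded operators on a complex Hilbert
space with ranges of equal (finite) dimension are connected by an E-chain of
length at most 3 of idempotent finite-rank operators. -/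
theorem idempotents_echain_length_three {H : Type*}
    [NormedAddCommGroup H] [InnerProductSpace ℂ H] [CompleteSpace H]
    (e f : H →L[ℂ] H)
    (he : e.comp e = e) (hf : f.comp f = f)
    (hre : FiniteDimensional ℂ (LinearMap.range (e : H →ₗ[ℂ] H)))
    (hrf : FiniteDimensional ℂ (LinearMap.range (f : H →ₗ[ℂ] H)))
    (hdim : Module.finrank ℂ (LinearMap.range (e : H →ₗ[ℂ] H)) = Module.finrank ℂ (LinearMap.range (f : H →ₗ[ℂ] H))) :
    ∃ g h : H →L[ℂ] H,
      g.comp g = g ∧ h.comp h = h ∧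
      FiniteDimensional ℂ (LinearMap.range (g : H →ₗ[ℂ] H)) ∧
      FiniteDimensional ℂ (LinearMap.range (h : H →ₗ[ℂ] H)) ∧
      ((e.comp g = g ∧ g.comp e = e) ∨ (e.comp g = e ∧ g.comp e = g)) ∧
      ((g.comp h = h ∧ h.comp g = g) ∨ (g.comp h = g ∧ h.comp g = h)) ∧
      ((h.comp f = f ∧ f.comp h = h) ∨ (h.comp f = h ∧ f.comp h = f)) :=
  idempotents_echain_length_three_general e f he hf hre hrf hdim
end

section
/- Let A be a von Neumann algebra acting on a complex Hilbert space H and let e ∈ A be an idempotent (e² = e). Then the Moore–Penrose inverse of e belongs to A: there exists g ∈ A with e·g·e = e, g·e·g = g, and both e·g and g·e self-adjoint. -/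
/-- The Moore–Penrose inverse of an idempotent element of a von
Neumann algebra belongs to the algebra. -/
theorem vonNeumann_idempotent_moore_penrose {H : Type*}
    [NormedAddCommGroup H] [InnerProductSpace ℂ H] [CompleteSpace H]
    (A : VonNeumannAlgebra H) (e : H →L[ℂ] H) (heA : e ∈ A) (he : e * e = e) :
    ∃ g : H →L[ℂ] H, g ∈ A ∧ e * g * e = e ∧ g * e * g = g ∧
      star (e * g) = e * g ∧ star (g * e) = g * e := by
  have hse : star e * star e = star e := by rw [← star_mul, he]
  obtain ⟨s, hs⟩ : ∃ s : H →L[ℂ] H, s = e + star e - 1 := ⟨_, rfl⟩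
  have hss : s * s = 1 + star (e - star e) * (e - star e) := by
    simp only [hs, star_sub, star_star]
    noncomm_ring [he, hse]
  -- s * s = 1 + (positive) is invertible
  have hspec : (-1 : ℝ) ∉ spectrum ℝ (star (e - star e) * (e - star e)) := fun h => by
    linarith [spectrum_star_mul_self_nonneg _ h]
  have hunit : IsUnit (s * s) := by
    rw [spectrum.notMem_iff] at hspec
    have heq : algebraMap ℝ (H →L[ℂ] H) (-1) - star (e - star e) * (e - star e)
        = -(1 + star (e - star e) * (e - star e)) := by
      simp [map_neg]; abel
    rw [heq] at hspec
    have := hspec.neg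
    rw [neg_neg] at this
    rwa [hss]
  obtain ⟨u, hu⟩ := hunit
  have hcomm : (u : H →L[ℂ] H) * s = s * (u : H →L[ℂ] H) := by
    rw [hu]; exact mul_assoc s s s
  have hC : Commute s (u : H →L[ℂ] H) := hcomm.symm
  have hcomm' : (↑u⁻¹ : H →L[ℂ] H) * s = s * ↑u⁻¹ := (hC.units_inv_right).symm.eq
  obtain ⟨t, ht⟩ : ∃ t : H →L[ℂ] H, t = ↑u⁻¹ * s := ⟨_, rfl⟩
  have hts : t * s = 1 := by rw [ht, mul_assoc, ← hu, Units.inv_mul]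
  have hst : s * t = 1 := by
    rw [ht, ← mul_assoc, ← hcomm', mul_assoc, ← hu, Units.inv_mul]
  -- t is self-adjoint
  have hss' : star s = s := by
    rw [hs]; simp only [star_sub, star_add, star_star, star_one]; rw [add_comm]
  have hstart : star t = t := by
    have h1 : s * star t = 1 := by
      rw [← hss', ← star_mul, hts, star_one]
    calc star t = (t * s) * star t := by rw [hts, one_mul]
    _ = t * (s * star t) := mul_assoc t s (star t)
    _ = t := by rw [h1, mul_one]
  -- key commutation relations
  have hes : e * s = s * star e := by rw [hs]; noncomm_ring [he, hse]
  have hse' : s * e = star e * s := by rw [hs]; noncomm_ring [he, hse]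
  have hse2 : s * e = star e * e := by rw [hs]; noncomm_ring [he]
  have het : e * t = t * star e := by
    calc e * t = (t * s) * (e * t) := by rw [hts, one_mul]
    _ = t * ((s * e) * t) := by rw [mul_assoc t s (e * t), ← mul_assoc s e t]
    _ = t * ((star e * s) * t) := by rw [hse']
    _ = t * (star e * (s * t)) := by rw [mul_assoc (star e) s t]
    _ = t * star e := by rw [hst, mul_one]
  have hte : t * e = star e * t := by
    calc t * e = (t * e) * (s * t) := by rw [hst, mul_one]
    _ = t * ((e * s) * t) := by rw [mul_assoc t e (s * t), ← mul_assoc e s t]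
    _ = t * ((s * star e) * t) := by rw [hes]
    _ = (t * s) * (star e * t) := by
        rw [mul_assoc s (star e) t, ← mul_assoc t s (star e * t)]
    _ = star e * t := by rw [hts, one_mul]
  have hete : e * t * e = e := by
    calc e * t * e = (t * star e) * e := by rw [het]
    _ = t * (star e * e) := mul_assoc t (star e) e
    _ = t * (s * e) := by rw [← hse2]
    _ = e := by rw [← mul_assoc, hts, one_mul]
  -- membership of t in A
  have hsA : s ∈ A := by
    rw [hs]
    exact sub_mem (add_mem heA (star_mem heA)) (one_mem A)
  have htA : t ∈ A := by
    have hmem : t ∈ Set.centralizer (Set.centralizer (A : Set (H →L[ℂ] H))) := by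
      intro z hz
      have hzs : z * s = s * z := (hz s hsA).symm
      have hzu : z * (u : H →L[ℂ] H) = u * z := by
        rw [hu, ← mul_assoc, hzs, mul_assoc, hzs, mul_assoc]
      have hzC : Commute z (u : H →L[ℂ] H) := hzu
      have hzu' : z * (↑u⁻¹ : H →L[ℂ] H) = ↑u⁻¹ * z := (hzC.units_inv_right).eq
      rw [ht, ← mul_assoc, hzu', mul_assoc, hzs, ← mul_assoc]
    rwa [A.centralizer_centralizer] at hmem
  have h1 : e * (t * e * t) = e * t := by
    rw [← mul_assoc, ← mul_assoc, hete]
  have h2 : (t * e * t) * e = t * e := by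
    rw [mul_assoc t e t, mul_assoc t (e * t) e, hete]
  refine ⟨t * e * t, mul_mem (mul_mem htA heA) htA, ?_, ?_, ?_, ?_⟩
  · rw [h1, hete]
  · rw [h2, mul_assoc t e (t * e * t), h1, ← mul_assoc]
  · rw [h1, star_mul, hstart, ← het]
  · rw [h2, star_mul, hstart, ← hte]
end

section
/- Let F be a field, n a positive integer, and A an n × n matrix over F that is not invertible (equivalently, det A = 0). Then A is a product of finitely many idempotent n × n matrices over F. -/
/-!
Let `S` be the submonoid generated by the idempotents; it is stable under conjugation and under
reindexing. A singular `A` has a nonzero left null vector `w`; conjugating by an invertible matrix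
having `w` as a row and reordering coordinates turns `A` into `[[B, C], [0, 0]]`. If `B` is
singular, `[[B, C], [0, 0]] = [[1, C], [0, 0]] * [[B, 0], [0, 1]]` and induction applies to `B`.
If `B` is invertible, `[[B, C], [0, 0]] = [[B, 0], [0, 0]] * [[1, B⁻¹ C], [0, 0]]`, and
`[[X, 0], [0, 0]] ∈ S` for every `X`: such `X` form a submonoid, which contains each
`1 + V * W` since `[[1 + V * W, 0], [0, 0]] = [[1, V], [0, 0]] * [[1, 0], [W, 0]]`, hence all
transvections and diagonal matrices, hence every matrix.
-/

open Matrix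

def idempotentClosure (M : Type*) [Monoid M] : Submonoid M :=
  Submonoid.closure {e | IsIdempotentElem e}

section Monoid

variable {M N G : Type*} [Monoid M] [Monoid N] [FunLike G M N] [MonoidHomClass G M N]

theorem map_mem_idempotentClosure (f : G) {x : M} (hx : x ∈ idempotentClosure M) :
    f x ∈ idempotentClosure N :=
  Submonoid.closure_le (S := (idempotentClosure N).comap f).2
    (fun _ he => Submonoid.subset_closure (he.map f)) hx

theorem units_conj_mem_idempotentClosure (u : Mˣ) {x : M} (hx : x ∈ idempotentClosure M) :
    ↑u * x * ↑u⁻¹ ∈ idempotentClosure M :=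
  map_mem_idempotentClosure
    ({ toFun := fun y => ↑u * y * ↑u⁻¹
       map_one' := by simp
       map_mul' := fun y z => by simp [mul_assoc] } : M →* M) hx

end Monoid

namespace Matrix

theorem eq_fromBlocks_of_row_inr_eq_zero {α κ : Type*} [Zero α]
    {M : Matrix (κ ⊕ Unit) (κ ⊕ Unit) α} (hM : ∀ j, M (.inr ()) j = 0) :
    M = fromBlocks M.toBlocks₁₁ M.toBlocks₁₂ 0 0 := by
  conv_lhs => rw [← fromBlocks_toBlocks M]
  congr <;> ext i j <;> exact hM _

variable {F : Type*} [Field F] {ι κ : Type*} [Fintype ι] [DecidableEq ι]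
  [Fintype κ] [DecidableEq κ]

theorem fromBlocks_one_add_mul_zero_mem_idempotentClosure (V : Matrix ι κ F)
    (W : Matrix κ ι F) :
    fromBlocks (1 + V * W) 0 0 (0 : Matrix κ κ F) ∈ idempotentClosure _ := by
  have hVW : fromBlocks (1 + V * W) 0 0 (0 : Matrix κ κ F) =
      fromBlocks 1 V 0 0 * fromBlocks 1 0 W 0 := by
    simp [fromBlocks_multiply]
  rw [hVW]
  exact mul_mem (Submonoid.subset_closure (by simp [IsIdempotentElem, fromBlocks_multiply]))
    (Submonoid.subset_closure (by simp [IsIdempotentElem, fromBlocks_multiply]))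

variable (F ι κ) in
def borderedSubmonoid : Submonoid (Matrix ι ι F) where
  carrier := {X | fromBlocks X 0 0 (0 : Matrix κ κ F) ∈ idempotentClosure _}
  mul_mem' {X Y} (hX : _ ∈ idempotentClosure _) (hY : _ ∈ idempotentClosure _) := by
    simpa [fromBlocks_multiply] using mul_mem hX hY
  one_mem' := Submonoid.subset_closure (by simp [IsIdempotentElem, fromBlocks_multiply])

theorem one_add_single_mem_borderedSubmonoid (i j : ι) (c : F) :
    1 + single i j c ∈ borderedSubmonoid F ι Unit := by
  have hsingle : single i j c =
      replicateCol Unit (Pi.single i c) * replicateRow Unit (Pi.single j (1 : F)) := by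
    rw [← vecMulVec_eq]
    ext a b
    simp only [single, vecMulVec, of_apply, Pi.single_apply, mul_ite, mul_one, mul_zero, ite_and]
    split_ifs <;> simp_all
  rw [hsingle]
  exact fromBlocks_one_add_mul_zero_mem_idempotentClosure _ _

theorem diagonal_mem_borderedSubmonoid (d : ι → F) :
    diagonal d ∈ borderedSubmonoid F ι Unit := by
  refine Submonoid.pi_mem_of_mulSingle_mem (H := (borderedSubmonoid F ι Unit).comap
    (diagonalRingHom ι F : (ι → F) →* Matrix ι ι F)) d fun i => ?_
  have hdiag : diagonal (Pi.mulSingle i (d i)) = 1 + single i i (d i - 1) := by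
    ext a b
    by_cases hab : a = b <;> by_cases hai : a = i <;>
      simp_all [single, one_apply, eq_comm]
  simpa [hdiag] using one_add_single_mem_borderedSubmonoid i i (d i - 1)

theorem borderedSubmonoid_eq_top : borderedSubmonoid F ι Unit = ⊤ := by
  refine (Submonoid.eq_top_iff' _).2 fun X => diagonal_transvection_induction (· ∈ _) X
    (fun d _ => diagonal_mem_borderedSubmonoid d)
    (fun t => one_add_single_mem_borderedSubmonoid t.i t.j t.c) (fun _ _ => mul_mem)

theorem fromBlocks_zero_mem_idempotentClosure (B : Matrix ι ι F) :
    fromBlocks B 0 0 (0 : Matrix Unit Unit F) ∈ idempotentClosure _ :=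
  (Submonoid.eq_top_iff' _).1 borderedSubmonoid_eq_top B

theorem fromBlocks_mem_idempotentClosure {B : Matrix ι ι F} (C : Matrix ι Unit F)
    (hB : B.det = 0 → B ∈ idempotentClosure _) :
    fromBlocks B C 0 (0 : Matrix Unit Unit F) ∈ idempotentClosure _ := by
  by_cases hdet : B.det = 0
  · let bordered : Matrix ι ι F →* Matrix (ι ⊕ Unit) (ι ⊕ Unit) F :=
      { toFun := fun X => fromBlocks X 0 0 1
        map_one' := fromBlocks_one
        map_mul' := fun X Y => by simp [fromBlocks_multiply] }
    have hsplit : fromBlocks B C 0 (0 : Matrix Unit Unit F) =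
        fromBlocks (1 : Matrix ι ι F) C 0 0 * bordered B := by
      simp [bordered, fromBlocks_multiply]
    rw [hsplit]
    exact mul_mem (Submonoid.subset_closure (by simp [IsIdempotentElem, fromBlocks_multiply]))
      (map_mem_idempotentClosure bordered (hB hdet))
  · have hsplit : fromBlocks B C 0 (0 : Matrix Unit Unit F) =
        fromBlocks B 0 0 0 * fromBlocks 1 (B⁻¹ * C) 0 0 := by
      simp [fromBlocks_multiply, mul_nonsing_inv_cancel_left B C (isUnit_iff_ne_zero.2 hdet)]
    rw [hsplit]
    exact mul_mem (fromBlocks_zero_mem_idempotentClosure B)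
      (Submonoid.subset_closure (by simp [IsIdempotentElem, fromBlocks_multiply]))

theorem exists_units_conj_row_eq_zero {A : Matrix ι ι F} {w : ι → F} (hwA : w ᵥ* A = 0)
    {k : ι} (hk : w k ≠ 0) :
    ∃ P : (Matrix ι ι F)ˣ, ∀ j, (P * A * P⁻¹ : Matrix ι ι F) k j = 0 := by
  set P : Matrix ι ι F :=
    1 + replicateCol Unit (Pi.single k (1 : F)) * replicateRow Unit (w - Pi.single k 1)
  have hdet : P.det = w k := by
    simp [P, det_one_add_replicateCol_mul_replicateRow]
  have hrow : P k = w := by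
    ext j
    rcases eq_or_ne k j with rfl | hj
    · simp [P, ← vecMulVec_eq, vecMulVec_apply]
    · simp [P, ← vecMulVec_eq, vecMulVec_apply, hj, hj.symm]
  refine ⟨((isUnit_iff_isUnit_det P).2 (hdet ▸ hk.isUnit)).unit, fun j => ?_⟩
  change ((P k ᵥ* A) ᵥ* _) j = 0
  rw [hrow, hwA, zero_vecMul, Pi.zero_apply]

theorem mem_idempotentClosure_of_det_eq_zero :
    ∀ (n : ℕ) (A : Matrix (Fin n) (Fin n) F), A.det = 0 → A ∈ idempotentClosure _
  | 0, A, hA => absurd hA (by simp)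
  | n + 1, A, hA => by
    obtain ⟨w, hw, hwA⟩ := exists_vecMul_eq_zero_iff.2 hA
    obtain ⟨k, hk⟩ := Function.ne_iff.1 hw
    obtain ⟨P, hrow⟩ := exists_units_conj_row_eq_zero hwA hk
    -- `e k = .inr ()`: the zero row `k` of `P * A * P⁻¹` becomes the bottom block row.
    let e : Fin (n + 1) ≃ Fin n ⊕ Unit := (finSuccEquiv' k).trans (Equiv.optionEquivSumPUnit _)
    set M := reindex e e (P * A * P⁻¹ : Matrix (Fin (n + 1)) (Fin (n + 1)) F)
    have hM : M = fromBlocks M.toBlocks₁₁ M.toBlocks₁₂ 0 0 :=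
      eq_fromBlocks_of_row_inr_eq_zero fun j => by simpa [M, e] using hrow _
    have hMmem : M ∈ idempotentClosure _ :=
      hM ▸ fromBlocks_mem_idempotentClosure _ (mem_idempotentClosure_of_det_eq_zero n _)
    have hconj :
        (P * A * P⁻¹ : Matrix (Fin (n + 1)) (Fin (n + 1)) F) ∈ idempotentClosure _ := by
      simpa [M] using map_mem_idempotentClosure (reindexAlgEquiv F F e.symm) hMmem
    simpa only [inv_inv, mul_assoc, Units.inv_mul, mul_one, Units.inv_mul_cancel_left] using
      units_conj_mem_idempotentClosure P⁻¹ hconj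

end Matrix

theorem singular_matrix_product_of_idempotents_general {F : Type*} [Field F]
    (n : ℕ) (A : Matrix (Fin n) (Fin n) F) (hA : A.det = 0) :
    ∃ l : List (Matrix (Fin n) (Fin n) F), l ≠ [] ∧
      (∀ E ∈ l, E * E = E) ∧ A = l.prod := by
  obtain ⟨l, hl, rfl⟩ := Submonoid.exists_list_of_mem_closure
    (mem_idempotentClosure_of_det_eq_zero n A hA)
  refine ⟨1 :: l, List.cons_ne_nil _ _, ?_, by simp⟩
  simpa [IsIdempotentElem] using hl

/-- Erdős: every singular square matrix over a field is a product
of finitely many idempotent matrices. -/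
theorem singular_matrix_product_of_idempotents {F : Type*} [Field F]
    (n : ℕ) (hn : 0 < n) (A : Matrix (Fin n) (Fin n) F) (hA : A.det = 0) :
    ∃ l : List (Matrix (Fin n) (Fin n) F), l ≠ [] ∧
      (∀ E ∈ l, E * E = E) ∧ A = l.prod :=
  singular_matrix_product_of_idempotents_general n A hA
end

section
/- Let X be a finite nonempty set and let α : X → X be a map that is not bijective. Then α is a composition of finitely many idempotent maps from X to X. -/
open Function

namespace HowieProof

variable {X : Type*}

def eps [DecidableEq X] (a b : X) : X → X := fun x => if x = a then b else x

lemma eps_self [DecidableEq X] (a b : X) : eps a b a = b := if_pos rfl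

lemma eps_of_ne [DecidableEq X] {a x : X} (b : X) (h : x ≠ a) : eps a b x = x := if_neg h

lemma eps_idem [DecidableEq X] {a b : X} (h : b ≠ a) : eps a b ∘ eps a b = eps a b := by
  funext x
  by_cases hx : x = a
  · subst hx
    simp [comp_apply, eps_self, eps_of_ne b h]
  · simp [comp_apply, eps_of_ne b hx]

/-- Key absorption lemma: a bijection fixing `z`, composed with a product of
idempotents whose image avoids `z`, is again a product of idempotents. -/
lemma aux [Fintype X] [DecidableEq X] (z : X) :
    ∀ n (δ : X → X), (Finset.univ.filter fun x => δ x ≠ x).card ≤ n →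
      Function.Bijective δ → δ z = z →
      ∀ ρ : X → X, (∀ x, ρ x ≠ z) →
      (∃ l : List (X → X), l ≠ [] ∧ (∀ e ∈ l, e ∘ e = e) ∧ ρ = l.foldr (· ∘ ·) id) →
      ∃ l : List (X → X), l ≠ [] ∧ (∀ e ∈ l, e ∘ e = e) ∧ δ ∘ ρ = l.foldr (· ∘ ·) id := by
  intro n
  induction n with
  | zero =>
    intro δ hcard hbij hz ρ hρ hl
    have hδ : δ = id := by
      funext x
      show δ x = x
      by_contra hx
      have hmem : x ∈ Finset.univ.filter fun x => δ x ≠ x := by simp [hx]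
      have := Finset.card_pos.mpr ⟨x, hmem⟩
      omega
    obtain ⟨l, h1, h2, h3⟩ := hl
    exact ⟨l, h1, h2, by simp [hδ, ← h3]⟩
  | succ n ih =>
    intro δ hcard hbij hz ρ hρ hl
    by_cases hid : ∀ x, δ x = x
    · have hδ : δ = id := funext hid
      obtain ⟨l, h1, h2, h3⟩ := hl
      exact ⟨l, h1, h2, by simp [hδ, ← h3]⟩
    push_neg at hid
    obtain ⟨a, ha⟩ := hid
    obtain ⟨b, hb⟩ : ∃ b, δ a = b := ⟨_, rfl⟩
    have haz : a ≠ z := by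
      intro h; subst h; exact ha hz
    have hbz : b ≠ z := by
      intro h
      subst h
      exact haz (hbij.injective (hb.trans hz.symm))
    have hba : b ≠ a := hb ▸ ha
    set δ' : X → X := fun x => Equiv.swap a b (δ x) with hδ'
    have hδ'z : δ' z = z := by
      show Equiv.swap a b (δ z) = z
      rw [hz]
      exact Equiv.swap_apply_of_ne_of_ne haz.symm hbz.symm
    have hδ'bij : Function.Bijective δ' := (Equiv.swap a b).bijective.comp hbij
    have hδ'a : δ' a = a := by
      show Equiv.swap a b (δ a) = a
      rw [hb]
      exact Equiv.swap_apply_right a b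
    have hsub : (Finset.univ.filter fun x => δ' x ≠ x) ⊂ (Finset.univ.filter fun x => δ x ≠ x) := by
      constructor
      · intro x hx
        simp only [Finset.mem_filter, Finset.mem_univ, true_and] at hx ⊢
        intro hfix
        apply hx
        have hxa : x ≠ a := fun h => ha (h ▸ hfix)
        have hxb : x ≠ b := by
          intro h
          apply ha
          have : δ a = δ x := by rw [hb, hfix, h]
          rw [hbij.injective this]
          exact hfix
        show Equiv.swap a b (δ x) = x
        rw [hfix]
        exact Equiv.swap_apply_of_ne_of_ne hxa hxb
      · intro hcon
        have hamem : a ∈ Finset.univ.filter fun x => δ x ≠ x := by simp [ha]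
        have := hcon hamem
        simp only [Finset.mem_filter, Finset.mem_univ, true_and] at this
        exact this hδ'a
    have hcard' : (Finset.univ.filter fun x => δ' x ≠ x).card ≤ n := by
      have := Finset.card_lt_card hsub
      omega
    obtain ⟨l', h1', h2', h3'⟩ := ih δ' hcard' hδ'bij hδ'z ρ hρ hl
    refine ⟨eps z a :: eps a b :: eps b z :: l', by simp, ?_, ?_⟩
    · intro e he
      simp only [List.mem_cons] at he
      rcases he with rfl | rfl | rfl | he
      · exact eps_idem haz
      · exact eps_idem hba
      · exact eps_idem hbz.symm
      · exact h2' e he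
    · have hfold : (eps z a :: eps a b :: eps b z :: l').foldr (· ∘ ·) id
        = eps z a ∘ eps a b ∘ eps b z ∘ l'.foldr (· ∘ ·) id := rfl
      rw [hfold, ← h3']
      funext x
      have key : ∀ y : X, y ≠ z → eps z a (eps a b (eps b z y)) = Equiv.swap a b y := by
        intro y hy
        by_cases hya : y = a
        · rw [hya, eps_of_ne z hba.symm, eps_self a b, eps_of_ne a hbz, Equiv.swap_apply_left]
        · by_cases hyb : y = b
          · rw [hyb, eps_self b z, eps_of_ne b haz.symm, eps_self z a, Equiv.swap_apply_right]
          · rw [eps_of_ne z hyb, eps_of_ne b hya, eps_of_ne a hy,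
              Equiv.swap_apply_of_ne_of_ne hya hyb]
      have hy : δ' (ρ x) ≠ z := fun h => hρ x (hδ'bij.injective (h.trans hδ'z.symm))
      have hrel : δ (ρ x) = Equiv.swap a b (δ' (ρ x)) := by
        show δ (ρ x) = Equiv.swap a b (Equiv.swap a b (δ (ρ x)))
        rw [Equiv.swap_apply_self]
      simp only [comp_apply]
      rw [key _ hy]
      exact hrel
    
lemma main_aux [Fintype X] [DecidableEq X] :
    ∀ n (γ : X → X), (Finset.univ.filter fun x => γ x ≠ x).card ≤ n →
      ¬ Function.Bijective γ →
      ∃ l : List (X → X), l ≠ [] ∧ (∀ e ∈ l, e ∘ e = e) ∧ γ = l.foldr (· ∘ ·) id := by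
  intro n
  induction n with
  | zero =>
    intro γ hcard hbij
    exfalso
    apply hbij
    have hγ : γ = id := by
      funext x
      show γ x = x
      by_contra hx
      have hmem : x ∈ Finset.univ.filter fun x => γ x ≠ x := by simp [hx]
      have := Finset.card_pos.mpr ⟨x, hmem⟩
      omega
    rw [hγ]; exact Function.bijective_id
  | succ n ih =>
    intro γ hcard hbij
    have hnsurj : ¬ Function.Surjective γ := by
      intro h
      exact hbij ⟨Finite.injective_iff_surjective.mpr h, h⟩
    rw [Function.Surjective] at hnsurj
    push_neg at hnsurj
    obtain ⟨z, hz⟩ := hnsurj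
    have hγz : γ z ≠ z := fun h => hz z h
    set β : X → X := fun x => if x = z then z else γ x with hβ
    have hβz : β z = z := if_pos rfl
    have hβne : ∀ x, x ≠ z → β x = γ x := fun x hx => if_neg hx
    by_cases hinj : Function.Injective β
    · -- β is a bijection fixing z; γ = β ∘ eps z q
      have hβbij : Function.Bijective β := Finite.injective_iff_bijective.mp hinj
      obtain ⟨q, hq⟩ := hβbij.surjective (γ z)
      have hqz : q ≠ z := by
        intro h
        subst h
        rw [hβz] at hq
        exact hγz hq.symm
      have hγeq : γ = β ∘ eps z q := by
        funext x
        by_cases hx : x = z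
        · subst hx
          simp only [comp_apply, eps_self, hq]
        · simp only [comp_apply, eps_of_ne q hx, hβne x hx]
      obtain ⟨l, h1, h2, h3⟩ := aux z (Finset.univ.filter fun x => β x ≠ x).card β
        le_rfl hβbij hβz (eps z q)
        (by
          intro x
          by_cases hx : x = z
          · subst hx; rw [eps_self]; exact hqz
          · rw [eps_of_ne q hx]; exact hx)
        ⟨[eps z q], by simp, by
          intro e he
          simp only [List.mem_cons, List.not_mem_nil, or_false] at he
          subst he
          exact eps_idem hqz, by simp [List.foldr]⟩
      exact ⟨l, h1, h2, by rw [hγeq, h3]⟩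
    · -- β is still singular; peel off eps z (γ z)
      have hβbij : ¬ Function.Bijective β := fun h => hinj h.injective
      have hsub : (Finset.univ.filter fun x => β x ≠ x) ⊂ (Finset.univ.filter fun x => γ x ≠ x) := by
        constructor
        · intro x hx
          simp only [Finset.mem_filter, Finset.mem_univ, true_and] at hx ⊢
          intro hfix
          apply hx
          by_cases h : x = z
          · subst h; exact hβz
          · rw [hβne x h]; exact hfix
        · intro hcon
          have hzmem : z ∈ Finset.univ.filter fun x => γ x ≠ x := by simp [hγz]
          have := hcon hzmem
          simp only [Finset.mem_filter, Finset.mem_univ, true_and] at this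
          exact this hβz
      have hcard' : (Finset.univ.filter fun x => β x ≠ x).card ≤ n := by
        have := Finset.card_lt_card hsub
        omega
      obtain ⟨l, h1, h2, h3⟩ := ih β hcard' hβbij
      refine ⟨eps z (γ z) :: l, by simp, ?_, ?_⟩
      · intro e he
        simp only [List.mem_cons] at he
        rcases he with rfl | he
        · exact eps_idem hγz
        · exact h2 e he
      · have hfold : (eps z (γ z) :: l).foldr (· ∘ ·) id
          = eps z (γ z) ∘ l.foldr (· ∘ ·) id := rfl
        rw [hfold, ← h3]
        funext x
        by_cases hx : x = z
        · subst hx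
          simp only [comp_apply, hβz, eps_self]
        · simp only [comp_apply, hβne x hx, eps_of_ne (γ z) (hz x)]

end HowieProof

/-- Howie: every non-bijective map of a finite nonempty set into
itself is a composition of finitely many idempotent maps. -/
theorem non_bijective_comp_of_idempotents {X : Type*} [Fintype X] [Nonempty X]
    (α : X → X) (hα : ¬ Function.Bijective α) :
    ∃ l : List (X → X), l ≠ [] ∧
      (∀ e ∈ l, e ∘ e = e) ∧ α = l.foldr (· ∘ ·) id := by
  classical
  exact HowieProof.main_aux (Finset.univ.filter fun x => α x ≠ x).card α le_rfl hα
end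

section
/- Every semigroup S can be embedded in an idempotent-generated semigroup: there exist a semigroup T and an injective semigroup homomorphism φ : S → T such that T is generated by its idempotents, i.e. every element of T is a product of finitely many idempotents of T. -/
private lemma foldl_mul_aux {T : Type*} [Semigroup T] :
    ∀ (l : List T) (x a : T), x * l.foldl (· * ·) a = l.foldl (· * ·) (x * a) := by
  intro l
  induction l with
  | nil => intro x a; rfl
  | cons b l ih =>
    intro x a
    simp only [List.foldl_cons]
    rw [ih, mul_assoc]

/-- Howie: every semigroup embeds in an idempotent-generated
semigroup. -/
theorem embeds_in_idempotent_generated (S : Type u) [Semigroup S] :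
    ∃ (T : Type u) (_ : Semigroup T) (φ : S → T),
      Function.Injective φ ∧
      (∀ a b : S, φ (a * b) = φ a * φ b) ∧
      (∀ t : T, ∃ (a : T) (l : List T),
        (∀ z ∈ a :: l, z * z = z) ∧ t = l.foldl (· * ·) a) := by
  classical
  set X := WithOne S × Bool with hX
  let M := Function.End X
  -- idempotent generators
  let E : Set M := {f | f * f = f}
  let Tsub : Subsemigroup M := Subsemigroup.closure E
  -- the two families of idempotents
  let e : S → M := fun a p => if p.2 then p else (↑a * p.1, true)
  let f0 : M := fun p => (p.1, false)
  have he : ∀ a, e a ∈ E := by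
    intro a
    funext p
    show e a (e a p) = e a p
    by_cases h : p.2 <;> simp [e, h]
  have hf0 : f0 ∈ E := by
    funext p
    rfl
  have hmem : ∀ a : S, e a * f0 ∈ Tsub :=
    fun a => Subsemigroup.mul_mem _ (Subsemigroup.subset_closure (he a))
      (Subsemigroup.subset_closure hf0)
  refine ⟨Tsub, inferInstance, fun a => ⟨e a * f0, hmem a⟩, ?_, ?_, ?_⟩
  · intro a b h
    have h2 := congrArg (fun (t : Tsub) => (t : M) ((1 : WithOne S), false)) h
    simp only [e, f0] at h2
    have : ((↑a * 1 : WithOne S), true) = ((↑b * 1 : WithOne S), true) := h2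
    have := congrArg Prod.fst this
    simpa using this
  · intro a b
    apply Subtype.ext
    funext p
    show ((↑(a*b) : WithOne S) * p.1, true)
        = (e a * f0) ((e b * f0) p)
    show ((↑(a*b) : WithOne S) * p.1, true)
        = (e a) (f0 ((e b) (f0 p)))
    simp [e, f0, mul_assoc]
  · rintro ⟨t, ht⟩
    induction ht using Subsemigroup.closure_induction with
    | mem x hx =>
      refine ⟨⟨x, Subsemigroup.subset_closure hx⟩, [], ?_, rfl⟩
      intro z hz
      simp only [List.mem_singleton] at hz
      subst hz
      exact Subtype.ext hx
    | mul x hx y hy ihx ihy =>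
      obtain ⟨a1, l1, h1, e1⟩ := ihx
      obtain ⟨a2, l2, h2, e2⟩ := ihy
      refine ⟨a1, l1 ++ a2 :: l2, ?_, ?_⟩
      · intro z hz
        simp only [List.cons_append, List.mem_cons, List.mem_append] at hz
        rcases hz with h | h | h | h
        · exact h1 _ (by simp [h])
        · exact h1 _ (by simp [h])
        · exact h2 _ (by simp [h])
        · exact h2 _ (by simp [h])
      · have hfold : ((l1 ++ a2 :: l2).foldl (· * ·) a1 : Tsub)
            = (l1.foldl (· * ·) a1) * (l2.foldl (· * ·) a2) := by
          rw [List.foldl_append, List.foldl_cons, ← foldl_mul_aux]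
        rw [hfold, ← e1, ← e2]
        rfl
end
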